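/- arXiv:2305.05739 — 3 statements merged into one kernel-verified Lean document; each statement's English description precedes it below -/
import Mathlib

section
/- Let M be a finite Markov chain (each non-target state has exactly two successors with positive transition probabilities), U ⊆ S \ T a set of non-target states each of which has a path to the target fin, x ≤ y reals, and let V' = {s ∈ U : sE \ U ≠ ∅} be the exits of U. If V' is nonempty and x ≤ ℙ^s[◇fin] ≤ y for all s ∈ V', then x ≤ ℙ^u[◇fin] ≤ y for all u ∈ U. -/
/-- Probability of a finite run: product of the transition probabilities
along consecutive pairs. -/
noncomputable def runProb {S : Type*} (μ : S → S → ℝ) (l : List S) : ℝ :=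
  ((l.zip l.tail).map fun p => μ p.1 p.2).prod

/-- The set of runs `s₀ … sₙ ∈ (S \ B)⁺ B`: nonempty words starting at `s₀`,
staying outside `B` until the last step, ending in `B`, following
positive-probability transitions. -/
def ReachRuns {S : Type*} (μ : S → S → ℝ) (B : Set S) (s₀ : S) : Set (List S) :=
  {l | l ≠ [] ∧ l.head? = some s₀ ∧ (∀ x ∈ l.dropLast, x ∉ B) ∧
    (∃ t ∈ B, l.getLast? = some t) ∧ l.Chain' fun a b => 0 < μ a b}

-- Probability of reaching `B` from `s₀`: 1 if `s₀ ∈ B`, otherwise the sum of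
-- the probabilities of all runs in `(S\B)⁺B` from `s₀`.
open Classical in
noncomputable def reachProb {S : Type*} (μ : S → S → ℝ) (B : Set S) (s₀ : S) : ℝ :=
  if s₀ ∈ B then 1 else ∑' l : ReachRuns μ B s₀, runProb μ (l : List S)

-- STATEMENT 7: in a finite Markov chain where every non-target state has
-- exactly two successors (positive probabilities summing to 1), if every
-- state of `U` has a path to `fin` and the exits of `U` have reachability
-- value in `[x,y]`, then so does every state of `U`.
section Aux
variable {S : Type*} (μ : S → S → ℝ)

lemma runProb_singleton (a : S) : runProb μ [a] = 1 := by simp [runProb]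

lemma runProb_cons_cons (a b : S) (l : List S) :
    runProb μ (a :: b :: l) = μ a b * runProb μ (b :: l) := by
  simp [runProb]

lemma runProb_nonneg (hnn : ∀ s s', 0 ≤ μ s s') (l : List S) : 0 ≤ runProb μ l := by
  apply List.prod_nonneg
  intro a ha
  simp only [List.mem_map] at ha
  obtain ⟨p, -, rfl⟩ := ha
  exact hnn _ _

/-- Prefix-free finite sets of positive chains from `s` have total probability ≤ 1. -/
lemma sum_runProb_le_one [Fintype S] (hnn : ∀ s s', 0 ≤ μ s s')
    (hrow : ∀ s, ∑ s', μ s s' ≤ 1) (d : S) :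
    ∀ (n : ℕ) (F : Finset (List S)) (s : S), (∑ l ∈ F, l.length) ≤ n →
    (∀ l ∈ F, l ≠ [] ∧ l.head? = some s ∧ l.Chain' fun a b => 0 < μ a b) →
    (∀ l₁ ∈ F, ∀ l₂ ∈ F, l₁ <+: l₂ → l₁ = l₂) →
    ∑ l ∈ F, runProb μ l ≤ 1 := by
  classical
  intro n
  induction n using Nat.strong_induction_on with
  | _ n IH =>
    intro F s hlen hmem hpf
    rcases F.eq_empty_or_nonempty with rfl | hFne
    · simp
    by_cases hsingle : [s] ∈ F
    · have hFeq : F = {[s]} := by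
        apply Finset.eq_singleton_iff_unique_mem.mpr
        refine ⟨hsingle, fun l hl => ?_⟩
        obtain ⟨hne, hhead, -⟩ := hmem l hl
        have : [s] <+: l := by
          cases l with
          | nil => exact absurd rfl hne
          | cons a t =>
            simp only [List.head?_cons, Option.some.injEq] at hhead
            subst hhead
            exact ⟨t, rfl⟩
        exact (hpf _ hsingle _ hl this).symm
      rw [hFeq]
      simp [runProb_singleton]
    · -- every element has length ≥ 2, i.e. is s :: s' :: r
      have hstruct : ∀ l ∈ F, ∃ s' r, l = s :: s' :: r := by
        intro l hl
        obtain ⟨hne, hhead, -⟩ := hmem l hl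
        cases l with
        | nil => exact absurd rfl hne
        | cons a t =>
          simp only [List.head?_cons, Option.some.injEq] at hhead
          subst hhead
          cases t with
          | nil => exact absurd hl hsingle
          | cons b r => exact ⟨b, r, rfl⟩
      set g : List S → S := fun l => l.tail.head?.getD d with hg
      rw [← Finset.sum_fiberwise_of_maps_to (fun l _ => Finset.mem_univ (g l))
        (runProb μ)]
      have key : ∀ s' : S, ∑ l ∈ F.filter (fun l => g l = s'),
          runProb μ l ≤ μ s s' := by
        intro s'
        set Fib := F.filter (fun l => g l = s') with hFib
        have hfib_struct : ∀ l ∈ Fib, ∃ r, l = s :: s' :: r := by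
          intro l hl
          rw [hFib, Finset.mem_filter] at hl
          obtain ⟨hlF, hgl⟩ := hl
          obtain ⟨s'', r, rfl⟩ := hstruct l hlF
          simp only [hg, List.tail_cons, List.head?_cons, Option.getD_some] at hgl
          subst hgl
          exact ⟨r, rfl⟩
        rcases Fib.eq_empty_or_nonempty with hFib0 | hFibne
        · rw [hFib0]; simpa using hnn s s'
        set T := Fib.image List.tail with hT
        have hinj : Set.InjOn List.tail (↑Fib : Set (List S)) := by
          intro l₁ h₁ l₂ h₂ he
          obtain ⟨r₁, rfl⟩ := hfib_struct l₁ h₁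
          obtain ⟨r₂, rfl⟩ := hfib_struct l₂ h₂
          simpa using he
        have hTsum : ∑ l ∈ Fib, runProb μ l = μ s s' * ∑ t ∈ T, runProb μ t := by
          rw [hT, Finset.sum_image (fun a ha b hb => hinj ha hb),
            Finset.mul_sum]
          apply Finset.sum_congr rfl
          intro l hl
          obtain ⟨r, rfl⟩ := hfib_struct l hl
          simp [runProb_cons_cons]
        rw [hTsum]
        have hTle : ∑ t ∈ T, runProb μ t ≤ 1 := by
          -- apply IH
          have hlenT : ∑ t ∈ T, t.length < n := by
            have h1 : ∑ t ∈ T, t.length = ∑ l ∈ Fib, l.tail.length := by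
              rw [hT, Finset.sum_image (fun a ha b hb => hinj ha hb)]
            have h2 : ∑ l ∈ Fib, l.tail.length < ∑ l ∈ Fib, l.length := by
              apply Finset.sum_lt_sum_of_nonempty hFibne
              intro l hl
              obtain ⟨r, rfl⟩ := hfib_struct l hl
              simp
            have h3 : ∑ l ∈ Fib, l.length ≤ ∑ l ∈ F, l.length :=
              Finset.sum_le_sum_of_subset (Finset.filter_subset _ _)
            omega
          rcases lt_of_lt_of_le hlenT (le_refl n) |>.le with h
          refine IH (∑ t ∈ T, t.length) hlenT T s' le_rfl ?_ ?_
          · intro t ht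
            rw [hT, Finset.mem_image] at ht
            obtain ⟨l, hl, rfl⟩ := ht
            obtain ⟨r, rfl⟩ := hfib_struct l hl
            have hchain := (hmem _ (Finset.mem_of_mem_filter _ hl)).2.2
            exact ⟨by simp, by simp, (List.isChain_cons.mp hchain).2⟩
          · intro t₁ h₁ t₂ h₂ hpre
            rw [hT, Finset.mem_image] at h₁ h₂
            obtain ⟨l₁, hl₁, rfl⟩ := h₁
            obtain ⟨l₂, hl₂, rfl⟩ := h₂
            obtain ⟨r₁, rfl⟩ := hfib_struct l₁ hl₁
            obtain ⟨r₂, rfl⟩ := hfib_struct l₂ hl₂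
            have : (s :: s' :: r₁) <+: (s :: s' :: r₂) := by
              simpa [List.cons_prefix_cons] using hpre
            have := hpf _ (Finset.mem_of_mem_filter _ hl₁) _
              (Finset.mem_of_mem_filter _ hl₂) this
            simpa using congrArg List.tail this
        calc μ s s' * ∑ t ∈ T, runProb μ t ≤ μ s s' * 1 :=
              mul_le_mul_of_nonneg_left hTle (hnn s s')
          _ = μ s s' := mul_one _
      calc ∑ s' : S, ∑ l ∈ F.filter (fun l => g l = s'), runProb μ l
          ≤ ∑ s' : S, μ s s' := Finset.sum_le_sum (fun s' _ => key s')
        _ ≤ 1 := hrow s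
end Aux

section Aux2
variable {S : Type*} [Fintype S] (μ : S → S → ℝ) (fin : S)

lemma ReachRuns_prefix_free {B : Set S} {s : S} :
    ∀ l₁ ∈ ReachRuns μ B s, ∀ l₂ ∈ ReachRuns μ B s, l₁ <+: l₂ → l₁ = l₂ := by
  intro l₁ h₁ l₂ h₂ hpre
  by_contra hne
  obtain ⟨r, rfl⟩ := hpre
  have hrne : r ≠ [] := by rintro rfl; simp at hne
  obtain ⟨hne₁, -, -, ⟨t, htB, hlast₁⟩, -⟩ := h₁
  obtain ⟨-, -, hdrop₂, -, -⟩ := h₂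
  -- the last element of l₁ is in B, but it lies in (l₁ ++ r).dropLast
  have hmem : t ∈ (l₁ ++ r).dropLast := by
    have h1 : t ∈ l₁ := by
      have := List.getLast?_eq_getLast (l := l₁) hne₁ ▸ hlast₁
      rw [List.getLast?_eq_getLast hne₁] at hlast₁
      have : t = l₁.getLast hne₁ := by simpa using hlast₁.symm
      subst this
      exact List.getLast_mem hne₁
    have : l₁ <+: (l₁ ++ r).dropLast := by
      rw [List.dropLast_append_of_ne_nil hrne]
      exact ⟨r.dropLast, rfl⟩
    exact this.subset h1
  exact hdrop₂ t hmem htB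

lemma summable_ReachRuns (hnn : ∀ s s', 0 ≤ μ s s')
    (hrow : ∀ s, ∑ s', μ s s' ≤ 1) (B : Set S) (s : S) :
    Summable (fun l : ReachRuns μ B s => runProb μ (l : List S)) := by
  classical
  apply summable_of_sum_le (c := 1)
  · intro l; exact runProb_nonneg μ hnn _
  · intro F
    have : ∑ l ∈ F, runProb μ (l : List S)
        = ∑ l ∈ F.image Subtype.val, runProb μ l := by
      rw [Finset.sum_image (by intro a _ b _ h; exact Subtype.ext h)]
    rw [this]
    apply sum_runProb_le_one μ hnn hrow s (∑ l ∈ F.image Subtype.val, l.length)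
      _ s le_rfl
    · intro l hl
      rw [Finset.mem_image] at hl
      obtain ⟨⟨l, hlR⟩, -, rfl⟩ := hl
      exact ⟨hlR.1, hlR.2.1, hlR.2.2.2.2⟩
    · intro l₁ h₁ l₂ h₂ hpre
      rw [Finset.mem_image] at h₁ h₂
      obtain ⟨⟨l₁, h₁R⟩, -, rfl⟩ := h₁
      obtain ⟨⟨l₂, h₂R⟩, -, rfl⟩ := h₂
      exact ReachRuns_prefix_free μ _ h₁R _ h₂R hpre

lemma mem_ReachRuns_cons {s s' : S} {t : List S} (hs : s ∉ ({fin} : Set S))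
    (hμ : 0 < μ s s') (ht : t ∈ ReachRuns μ {fin} s') :
    s :: t ∈ ReachRuns μ {fin} s := by
  obtain ⟨htne, hthead, htdrop, htlast, htchain⟩ := ht
  refine ⟨by simp, by simp, ?_, ?_, ?_⟩
  · intro x hx
    cases t with
    | nil => exact absurd rfl htne
    | cons b r =>
      rw [List.dropLast_cons₂] at hx
      rcases List.mem_cons.mp hx with h | hx
      · exact h ▸ hs
      · exact htdrop x hx
  · obtain ⟨u, huB, hu⟩ := htlast
    refine ⟨u, huB, ?_⟩
    cases t with
    | nil => exact absurd rfl htne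
    | cons b r => rw [List.getLast?_cons_cons]; exact hu
  · refine List.isChain_cons.mpr ?_
    refine ⟨?_, htchain⟩
    intro b hb
    rw [hthead] at hb
    simp only [Option.mem_some_iff] at hb
    subst hb
    exact hμ

lemma ReachRuns_dest {s : S} (hs : s ≠ fin) {l : List S}
    (hl : l ∈ ReachRuns μ {fin} s) :
    ∃ s' t, l = s :: t ∧ 0 < μ s s' ∧ t ∈ ReachRuns μ {fin} s' := by
  obtain ⟨hne, hhead, hdrop, ⟨u, huB, hlast⟩, hchain⟩ := hl
  rw [Set.mem_singleton_iff] at huB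
  rw [huB] at hlast
  cases l with
  | nil => exact absurd rfl hne
  | cons a t =>
    simp only [List.head?_cons, Option.some.injEq] at hhead
    subst hhead
    cases t with
    | nil =>
      simp only [List.getLast?_singleton, Option.some.injEq] at hlast
      exact absurd hlast hs
    | cons b r =>
      refine ⟨b, b :: r, rfl, ?_, ?_⟩
      · exact (List.isChain_cons_cons.mp hchain).1
      · refine ⟨by simp, by simp, ?_, ?_, (List.isChain_cons_cons.mp hchain).2⟩
        · intro x hx
          apply hdrop x
          rw [List.dropLast_cons₂]
          exact List.mem_cons_of_mem _ hx
        · exact ⟨fin, rfl, by rw [List.getLast?_cons_cons] at hlast; exact hlast⟩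

lemma ReachRuns_fin (habs : ∀ s', μ fin s' = 0) :
    ReachRuns μ ({fin} : Set S) fin = {[fin]} := by
  ext l
  constructor
  · rintro ⟨hne, hhead, hdrop, ⟨u, huB, hlast⟩, hchain⟩
    cases l with
    | nil => exact absurd rfl hne
    | cons a t =>
      simp only [List.head?_cons, Option.some.injEq] at hhead
      subst hhead
      cases t with
      | nil => rfl
      | cons b r =>
        exfalso
        have := (List.isChain_cons_cons.mp hchain).1
        rw [habs b] at this
        exact lt_irrefl 0 this
  · rintro rfl
    exact ⟨by simp, by simp, by simp, ⟨fin, rfl, by simp⟩, List.isChain_singleton _⟩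

lemma tsum_ReachRuns_eq (habs : ∀ s', μ fin s' = 0) (s : S) :
    ∑' l : ReachRuns μ {fin} s, runProb μ (l : List S) = reachProb μ {fin} s := by
  classical
  rw [reachProb]
  split_ifs with h
  · rw [Set.mem_singleton_iff] at h
    rw [show s = fin from h, ReachRuns_fin μ fin habs, tsum_singleton]
    exact runProb_singleton μ fin
  · rfl
end Aux2

section Aux3
variable {S : Type*} [Fintype S] (μ : S → S → ℝ) (fin : S)

lemma runProb_cons_of_head {t : List S} {s s' : S} (h : t.head? = some s') :
    runProb μ (s :: t) = μ s s' * runProb μ t := by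
  cases t with
  | nil => simp at h
  | cons b r =>
    simp only [List.head?_cons, Option.some.injEq] at h
    subst h
    exact runProb_cons_cons μ s b r

lemma reachProb_harmonic (hnn : ∀ s s', 0 ≤ μ s s')
    (hrow : ∀ s, ∑ s', μ s s' ≤ 1) (habs : ∀ s', μ fin s' = 0)
    {s : S} (hs : s ≠ fin) :
    reachProb μ {fin} s = ∑ s' : S, μ s s' * reachProb μ {fin} s' := by
  classical
  set f := runProb μ with hf
  set Φ := Finset.univ.filter (fun s' => 0 < μ s s') with hΦ
  have hsB : s ∉ ({fin} : Set S) := by simpa using hs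
  have hfnn : ∀ l, 0 ≤ f l := fun l => runProb_nonneg μ hnn l
  have hsummR : ∀ s₀ : S, Summable ((ReachRuns μ {fin} s₀).indicator f) := by
    intro s₀
    exact summable_subtype_iff_indicator.mp (summable_ReachRuns μ hnn hrow _ s₀)
  have himg_sub : ∀ s' ∈ Φ,
      (List.cons s '' ReachRuns μ {fin} s') ⊆ ReachRuns μ {fin} s := by
    intro s' hs' l hl
    obtain ⟨t, ht, rfl⟩ := hl
    rw [hΦ, Finset.mem_filter] at hs'
    exact mem_ReachRuns_cons μ fin hsB hs'.2 ht
  have hsummI : ∀ s' ∈ Φ,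
      Summable ((List.cons s '' ReachRuns μ {fin} s').indicator f) := by
    intro s' hs'
    refine Summable.of_nonneg_of_le
      (fun l => Set.indicator_nonneg (fun l _ => hfnn l) l) ?_ (hsummR s)
    exact fun l => Set.indicator_le_indicator_of_subset (himg_sub s' hs') hfnn l
  have hdecomp : ∀ l, (ReachRuns μ {fin} s).indicator f l
      = ∑ s' ∈ Φ, (List.cons s '' ReachRuns μ {fin} s').indicator f l := by
    intro l
    by_cases hl : l ∈ ReachRuns μ {fin} s
    · obtain ⟨s₁, t, rfl, hμ₁, ht⟩ := ReachRuns_dest μ fin hs hl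
      rw [Set.indicator_of_mem hl]
      rw [Finset.sum_eq_single s₁]
      · have hmem : s :: t ∈ List.cons s '' ReachRuns μ {fin} s₁ := ⟨t, ht, rfl⟩
        rw [Set.indicator_of_mem hmem]
      · intro s' hs' hne
        apply Set.indicator_of_notMem
        rintro ⟨t', ht', he⟩
        have htt : t' = t := by simpa using he
        subst htt
        have h1 := ht.2.1
        have h2 := ht'.2.1
        rw [h1] at h2
        simp only [Option.some.injEq] at h2
        exact hne h2.symm
      · intro hs₁
        exact absurd (by simp [hΦ, hμ₁]) hs₁
    · rw [Set.indicator_of_notMem hl]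
      symm
      apply Finset.sum_eq_zero
      intro s' hs'
      exact Set.indicator_of_notMem (fun hmem => hl (himg_sub s' hs' hmem)) _
  have step1 : reachProb μ {fin} s = ∑' l : ReachRuns μ {fin} s, f (l : List S) := by
    rw [reachProb, if_neg hsB]
  rw [step1, tsum_subtype (ReachRuns μ {fin} s) f, tsum_congr hdecomp,
    Summable.tsum_finsetSum hsummI]
  have hper : ∀ s' ∈ Φ, ∑' l, (List.cons s '' ReachRuns μ {fin} s').indicator f l
      = μ s s' * reachProb μ {fin} s' := by
    intro s' hs'
    rw [← tsum_subtype (List.cons s '' ReachRuns μ {fin} s') f,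
      tsum_image f (fun (a : List S) _ (b : List S) _ h => by simpa using h)]
    have : ∀ t : ReachRuns μ {fin} s',
        f (s :: (t : List S)) = μ s s' * f (t : List S) := by
      intro t
      exact runProb_cons_of_head μ t.2.2.1
    rw [tsum_congr this, tsum_mul_left, tsum_ReachRuns_eq μ fin habs s']
  rw [Finset.sum_congr rfl hper]
  rw [hΦ]
  apply Finset.sum_filter_of_ne
  intro s' _ h
  rcases (hnn s s').eq_or_lt with he | hlt
  · exfalso; apply h; rw [← he, zero_mul]
  · exact hlt

end Aux3

section Aux4
variable {S : Type*} [Fintype S] (μ : S → S → ℝ)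

lemma max_principle (hnn : ∀ s s', 0 ≤ μ s s') {fin : S}
    (U : Set S) (hfinU : fin ∉ U)
    (h : S → ℝ) (hharm : ∀ s ∈ U, h s = ∑ s' : S, μ s s' * h s')
    (hrowU : ∀ s ∈ U, ∑ s' : S, μ s s' = 1)
    (hpath : ∀ u ∈ U, Relation.ReflTransGen (fun a b => 0 < μ a b) u fin)
    (c : ℝ) (hbd : ∀ s ∈ U, (∃ s', 0 < μ s s' ∧ s' ∉ U) → h s ≤ c) :
    ∀ u ∈ U, h u ≤ c := by
  classical
  intro u hu
  have hUfin : U.Finite := Set.toFinite U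
  set F := hUfin.toFinset with hF
  have hFne : F.Nonempty := ⟨u, hUfin.mem_toFinset.mpr hu⟩
  set m := (F.image h).max' (hFne.image h) with hm
  have hle : ∀ v ∈ U, h v ≤ m := by
    intro v hv
    exact Finset.le_max' _ _ (Finset.mem_image_of_mem h (hUfin.mem_toFinset.mpr hv))
  have hex : ∃ v ∈ U, h v = m := by
    obtain ⟨v, hv, hvm⟩ := Finset.mem_image.mp ((F.image h).max'_mem (hFne.image h))
    exact ⟨v, hUfin.mem_toFinset.mp hv, hvm⟩
  have key : ∀ s : S, Relation.ReflTransGen (fun a b => 0 < μ a b) s fin →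
      s ∈ U → h s = m → ∃ v ∈ U, (∃ s', 0 < μ v s' ∧ s' ∉ U) ∧ h v = m := by
    intro s hst
    induction hst using Relation.ReflTransGen.head_induction_on with
    | refl => exact fun hfin' _ => absurd hfin' hfinU
    | head hr hrt IH =>
      rename_i a b'
      intro ha hma
      by_cases hexit : ∃ s', 0 < μ a s' ∧ s' ∉ U
      · exact ⟨a, ha, hexit, hma⟩
      · push_neg at hexit
        have hbU : b' ∈ U := hexit _ hr
        have hterm : ∀ s' : S, μ a s' * h s' ≤ μ a s' * m := by
          intro s'
          rcases (hnn a s').eq_or_lt with he | hlt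
          · rw [← he]; simp
          · exact mul_le_mul_of_nonneg_left (hle _ (hexit _ hlt)) (hnn a s')
        have hsum : ∑ s' : S, μ a s' * h s' = m := by rw [← hharm a ha, hma]
        have hbm : h b' = m := by
          by_contra hne
          have hlt' : h b' < m := lt_of_le_of_ne (hle _ hbU) hne
          have hstrict : ∑ s' : S, μ a s' * h s' < ∑ s' : S, μ a s' * m :=
            Finset.sum_lt_sum (fun i _ => hterm i)
              ⟨b', Finset.mem_univ _, mul_lt_mul_of_pos_left hlt' hr⟩
          rw [hsum, ← Finset.sum_mul, hrowU a ha, one_mul] at hstrict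
          exact lt_irrefl m hstrict
        exact IH hbU hbm
  obtain ⟨v0, hv0, hv0m⟩ := hex
  obtain ⟨v, hvU, hvex, hvm⟩ := key v0 (hpath v0 hv0) hv0 hv0m
  calc h u ≤ m := hle u hu
    _ = h v := hvm.symm
    _ ≤ c := hbd v hvU hvex

end Aux4


open Classical in
theorem stmt7 {S : Type*} [Fintype S] (μ : S → S → ℝ) (fin fail : S)
    (hne' : fin ≠ fail)
    (hnn : ∀ s s', 0 ≤ μ s s')
    (habs : ∀ s', μ fin s' = 0 ∧ μ fail s' = 0)
    (htwo : ∀ s, s ≠ fin → s ≠ fail →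
      (Finset.univ.filter fun s' => 0 < μ s s').card = 2 ∧
      ∑ s' : S, μ s s' = 1)
    (U : Set S) (hU : ∀ u ∈ U, u ≠ fin ∧ u ≠ fail)
    (hpath : ∀ u ∈ U, Relation.ReflTransGen (fun a b => 0 < μ a b) u fin)
    (x y : ℝ) (hxy : x ≤ y)
    (hVne : {s | s ∈ U ∧ ∃ s', 0 < μ s s' ∧ s' ∉ U}.Nonempty)
    (hbd : ∀ s ∈ {s | s ∈ U ∧ ∃ s', 0 < μ s s' ∧ s' ∉ U},
      x ≤ reachProb μ {fin} s ∧ reachProb μ {fin} s ≤ y) :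
    ∀ u ∈ U, x ≤ reachProb μ {fin} u ∧ reachProb μ {fin} u ≤ y := by
  have hrow_le : ∀ s, ∑ s', μ s s' ≤ 1 := by
    intro s
    by_cases h1 : s = fin
    · subst h1
      have : ∑ s' : S, μ s s' = 0 := Finset.sum_eq_zero (fun s' _ => (habs s').1)
      rw [this]; norm_num
    by_cases h2 : s = fail
    · subst h2
      have : ∑ s' : S, μ s s' = 0 := Finset.sum_eq_zero (fun s' _ => (habs s').2)
      rw [this]; norm_num
    exact le_of_eq (htwo s h1 h2).2
  have hharm : ∀ s ∈ U, reachProb μ {fin} s = ∑ s' : S, μ s s' * reachProb μ {fin} s' :=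
    fun s hs => reachProb_harmonic μ fin hnn hrow_le (fun s' => (habs s').1) (hU s hs).1
  have hrowU : ∀ s ∈ U, ∑ s' : S, μ s s' = 1 :=
    fun s hs => (htwo s (hU s hs).1 (hU s hs).2).2
  have hfinU : fin ∉ U := fun h => (hU fin h).1 rfl
  intro u hu
  constructor
  · have hharm' : ∀ s ∈ U, (fun t => - reachProb μ {fin} t) s
        = ∑ s' : S, μ s s' * (fun t => - reachProb μ {fin} t) s' := by
      intro s hs
      simp only
      rw [hharm s hs, ← Finset.sum_neg_distrib]
      exact Finset.sum_congr rfl (fun i _ => (mul_neg _ _).symm)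
    have := max_principle μ hnn U hfinU (fun t => - reachProb μ {fin} t)
      hharm' hrowU hpath (-x) (fun s hs hexit => neg_le_neg ((hbd s ⟨hs, hexit⟩).1))
      u hu
    have h2 : -reachProb μ {fin} u ≤ -x := this
    linarith
  · exact max_principle μ hnn U hfinU (reachProb μ {fin}) hharm hrowU hpath y
      (fun s hs hexit => (hbd s ⟨hs, hexit⟩).2) u hu
end

section
/- Let s be a non-target state in a finite Markov chain with exactly two successors a and b, each with positive transition probability summing to 1, and suppose for every graph-preserving probability assignment the reachability value of s equals that of b (they are NWR-equivalent). Then for every graph-preserving assignment the value of s also equals that of a. (Hence if an exit of an NWR equivalence class has one successor outside the class, both successors lie outside the class.) -/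
/-- Graph-preserving valuations of a trivially parametric Markov chain. -/
def gpMC {S : Type*} [Fintype S] (E : S → S → Prop) (fin fail : S)
    (val : S → S → ℝ) : Prop :=
  (∀ s s', E s s' → 0 < val s s') ∧ (∀ s s', ¬ E s s' → val s s' = 0) ∧
  (∀ s, s ≠ fin → s ≠ fail → ∑ s' : S, val s s' = 1)

namespace Stmt11Aux
variable {S : Type*}

lemma runProb_singleton (μ : S → S → ℝ) (x : S) : runProb μ [x] = 1 := by
  simp [runProb]

lemma runProb_cons (μ : S → S → ℝ) (x y : S) (l : List S) :
    runProb μ (x :: y :: l) = μ x y * runProb μ (y :: l) := by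
  simp [runProb]

lemma runProb_nonneg {μ : S → S → ℝ} (hnn : ∀ x y, 0 ≤ μ x y) (l : List S) :
    0 ≤ runProb μ l := by
  apply List.prod_nonneg
  intro x hx
  simp only [List.mem_map] at hx
  obtain ⟨p, -, rfl⟩ := hx
  exact hnn _ _

lemma reachRuns_cons {μ : S → S → ℝ} {B : Set S} {s c : S} {l : List S}
    (hsB : s ∉ B) (hpos : 0 < μ s c) (hl : l ∈ ReachRuns μ B c) :
    (s :: l) ∈ ReachRuns μ B s := by
  obtain ⟨hne, hhead, hdrop, ⟨t, htB, hlast⟩, hchain⟩ := hl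
  obtain ⟨c', r, rfl⟩ : ∃ c' r, l = c' :: r := by
    cases l with
    | nil => exact absurd rfl hne
    | cons c' r => exact ⟨c', r, rfl⟩
  have hc : c' = c := by simpa using hhead
  subst hc
  refine ⟨by simp, by simp, ?_, ⟨t, htB, by simpa using hlast⟩, ?_⟩
  · intro x hx
    rw [List.dropLast_cons₂] at hx
    rcases List.mem_cons.1 hx with hx | hx
    · exact hx ▸ hsB
    · exact hdrop x hx
  · exact List.isChain_cons_cons.2 ⟨hpos, hchain⟩

lemma reachRuns_elim {μ : S → S → ℝ} {B : Set S} {s : S} (hsB : s ∉ B) {l : List S}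
    (hl : l ∈ ReachRuns μ B s) :
    ∃ c r, l = s :: c :: r ∧ 0 < μ s c ∧ (c :: r) ∈ ReachRuns μ B c := by
  obtain ⟨hne, hhead, hdrop, ⟨t, htB, hlast⟩, hchain⟩ := hl
  obtain ⟨s', rest, rfl⟩ : ∃ s' rest, l = s' :: rest := by
    cases l with
    | nil => exact absurd rfl hne
    | cons s' rest => exact ⟨s', rest, rfl⟩
  have hs : s = s' := by symm; simpa using hhead
  subst hs
  cases rest with
  | nil =>
    exfalso
    have h : s = t := by simpa using hlast
    subst h
    exact hsB htB
  | cons c r =>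
    have hch := List.isChain_cons_cons.1 hchain
    refine ⟨c, r, rfl, hch.1, by simp, rfl, ?_, ⟨t, htB, by simpa using hlast⟩, hch.2⟩
    intro x hx
    apply hdrop x
    rw [List.dropLast_cons₂]
    exact List.mem_cons_of_mem _ hx

lemma reachRuns_mem_B {μ : S → S → ℝ} {B : Set S} {s : S} (hsB : s ∈ B) :
    ReachRuns μ B s = {[s]} := by
  ext l
  constructor
  · rintro ⟨hne, hhead, hdrop, ⟨t, htB, hlast⟩, hchain⟩
    obtain ⟨s', rest, rfl⟩ : ∃ s' rest, l = s' :: rest := by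
      cases l with
      | nil => exact absurd rfl hne
      | cons s' rest => exact ⟨s', rest, rfl⟩
    have hs : s = s' := by symm; simpa using hhead
    subst hs
    cases rest with
    | nil => rfl
    | cons c r =>
      exfalso
      apply hdrop s _ hsB
      rw [List.dropLast_cons₂]
      exact List.mem_cons_self
  · rintro rfl
    exact ⟨by simp, by simp, by simp, ⟨s, hsB, by simp⟩, List.isChain_singleton _⟩

lemma reachRuns_dead {μ : S → S → ℝ} {B : Set S} {s : S} (hsB : s ∉ B)
    (hdead : ∀ c, ¬ 0 < μ s c) : ReachRuns μ B s = ∅ := by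
  ext l
  simp only [Set.mem_empty_iff_false, iff_false]
  intro hl
  obtain ⟨c, r, -, hpos, -⟩ := reachRuns_elim hsB hl
  exact hdead c hpos
variable {S : Type*} [Fintype S] {E : S → S → Prop} {fin fail : S} {val : S → S → ℝ}

lemma val_nonneg (hval : gpMC E fin fail val) (x y : S) : 0 ≤ val x y := by
  by_cases h : E x y
  · exact (hval.1 x y h).le
  · exact le_of_eq (hval.2.1 x y h).symm

lemma kraft (hval : gpMC E fin fail val) (habs : ∀ s', ¬ E fin s' ∧ ¬ E fail s')
    (hne : fin ≠ fail) :
    ∀ (n : ℕ) (t : S) (F : Finset (List S)),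
      (∀ l ∈ F, l ∈ ReachRuns val {fin} t ∧ l.length ≤ n) →
      ∑ l ∈ F, runProb val l ≤ 1 := by
  classical
  intro n
  induction n with
  | zero =>
    intro t F hF
    have hF0 : F = ∅ := by
      apply Finset.eq_empty_of_forall_notMem
      intro l hl
      obtain ⟨hm, hlen⟩ := hF l hl
      cases l with
      | nil => exact hm.1 rfl
      | cons x r => simp at hlen
    simp [hF0]
  | succ n ih =>
    intro t F hF
    by_cases htfin : t = fin
    · subst htfin
      have hsub : F ⊆ {[t]} := by
        intro l hl
        have := (hF l hl).1
        rw [reachRuns_mem_B (show t ∈ ({t} : Set S) from rfl)] at this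
        simpa using this
      rcases Finset.subset_singleton_iff.1 hsub with rfl | rfl
      · simp
      · simp [runProb_singleton]
    · by_cases htfail : t = fail
      · subst htfail
        have hdead : ReachRuns val {fin} t = ∅ := by
          apply reachRuns_dead (by simpa using (Ne.symm hne))
          intro c hc
          have := hval.2.1 t c (habs c).2
          rw [this] at hc
          exact lt_irrefl 0 hc
        have hF0 : F = ∅ := by
          apply Finset.eq_empty_of_forall_notMem
          intro l hl
          have := (hF l hl).1
          rw [hdead] at this
          exact this
        simp [hF0]
      · -- t is a non-target state
        have htB : t ∉ ({fin} : Set S) := by simpa using htfin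
        have hform : ∀ l ∈ F, ∃ c r, l = t :: c :: r ∧ 0 < val t c ∧
            (c :: r) ∈ ReachRuns val {fin} c ∧ (c :: r).length ≤ n := by
          intro l hl
          obtain ⟨hm, hlen⟩ := hF l hl
          obtain ⟨c, r, rfl, hpos, hmem⟩ := reachRuns_elim htB hm
          refine ⟨c, r, rfl, hpos, hmem, ?_⟩
          simp only [List.length_cons] at hlen ⊢
          omega
        calc ∑ l ∈ F, runProb val l
            = ∑ c : S, ∑ l ∈ F.filter (fun l => l.getD 1 t = c), runProb val l :=
              (Finset.sum_fiberwise_of_maps_to (fun l _ => Finset.mem_univ _) _).symm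
          _ ≤ ∑ c : S, val t c := by
              apply Finset.sum_le_sum
              intro c _
              set Fc := F.filter (fun l => l.getD 1 t = c) with hFc
              have hFcform : ∀ l ∈ Fc, ∃ r, l = t :: c :: r ∧
                  (c :: r) ∈ ReachRuns val {fin} c ∧ (c :: r).length ≤ n := by
                intro l hl
                rw [hFc, Finset.mem_filter] at hl
                obtain ⟨c', r, rfl, hpos, hmem, hlen⟩ := hform l hl.1
                have hcc : c' = c := by simpa using hl.2
                subst hcc
                exact ⟨r, rfl, hmem, hlen⟩
              have h1 : ∑ l ∈ Fc, runProb val l = val t c * ∑ l ∈ Fc, runProb val l.tail := by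
                rw [Finset.mul_sum]
                apply Finset.sum_congr rfl
                intro l hl
                obtain ⟨r, rfl, -, -⟩ := hFcform l hl
                rw [runProb_cons]
                rfl
              have h2 : ∑ l ∈ Fc, runProb val l.tail
                  = ∑ m ∈ Fc.image List.tail, runProb val m := by
                symm
                apply Finset.sum_image
                intro x hx y hy hxy
                obtain ⟨r, rfl, -, -⟩ := hFcform x hx
                obtain ⟨r', rfl, -, -⟩ := hFcform y hy
                simpa using hxy
              have h3 : ∑ m ∈ Fc.image List.tail, runProb val m ≤ 1 := by
                apply ih c
                intro m hm
                obtain ⟨l, hl, rfl⟩ := Finset.mem_image.1 hm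
                obtain ⟨r, rfl, hmem, hlen⟩ := hFcform l hl
                exact ⟨hmem, hlen⟩
              rw [h1, h2]
              calc val t c * ∑ m ∈ Fc.image List.tail, runProb val m
                  ≤ val t c * 1 := mul_le_mul_of_nonneg_left h3 (val_nonneg hval t c)
                _ = val t c := mul_one _
          _ = 1 := hval.2.2 t htfin htfail

lemma kraft' (hval : gpMC E fin fail val) (habs : ∀ s', ¬ E fin s' ∧ ¬ E fail s')
    (hne : fin ≠ fail) (t : S) (F : Finset (List S))
    (hF : ∀ l ∈ F, l ∈ ReachRuns val {fin} t) :
    ∑ l ∈ F, runProb val l ≤ 1 :=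
  kraft hval habs hne (F.sup List.length) t F
    (fun l hl => ⟨hF l hl, Finset.le_sup (f := List.length) hl⟩)

variable {S : Type*} [Fintype S] {E : S → S → Prop} {fin fail : S} {val : S → S → ℝ}

noncomputable def ennsum (val : S → S → ℝ) (fin : S) (t : S) : ENNReal :=
  ∑' l : ReachRuns val {fin} t, ENNReal.ofReal (runProb val (l : List S))

lemma ennsum_le_one (hval : gpMC E fin fail val) (habs : ∀ s', ¬ E fin s' ∧ ¬ E fail s')
    (hne : fin ≠ fail) (t : S) : ennsum val fin t ≤ 1 := by
  classical
  rw [ennsum, ENNReal.tsum_eq_iSup_sum]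
  apply iSup_le
  intro Fs
  rw [← ENNReal.ofReal_sum_of_nonneg (fun i _ => runProb_nonneg (val_nonneg hval) _)]
  have h2 : ∑ x ∈ Fs, runProb val (x : List S)
      = ∑ l ∈ Fs.image Subtype.val, runProb val l :=
    (Finset.sum_image (fun x _ y _ h => Subtype.ext h)).symm
  rw [h2]
  calc ENNReal.ofReal (∑ l ∈ Fs.image Subtype.val, runProb val l)
      ≤ ENNReal.ofReal 1 := by
        apply ENNReal.ofReal_le_ofReal
        apply kraft' hval habs hne t
        intro l hl
        obtain ⟨x, -, rfl⟩ := Finset.mem_image.1 hl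
        exact x.2
    _ = 1 := ENNReal.ofReal_one

lemma ennsum_ne_top (hval : gpMC E fin fail val) (habs : ∀ s', ¬ E fin s' ∧ ¬ E fail s')
    (hne : fin ≠ fail) (t : S) : ennsum val fin t ≠ ⊤ :=
  ne_top_of_le_ne_top ENNReal.one_ne_top (ennsum_le_one hval habs hne t)

lemma reachProb_eq_toReal (hval : gpMC E fin fail val)
    (habs : ∀ s', ¬ E fin s' ∧ ¬ E fail s') (hne : fin ≠ fail) (t : S) :
    reachProb val {fin} t = (ennsum val fin t).toReal := by
  by_cases ht : t ∈ ({fin} : Set S)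
  · rw [reachProb, if_pos ht, ennsum, reachRuns_mem_B ht,
      tsum_singleton ([t]) (fun l => ENNReal.ofReal (runProb val l)),
      runProb_singleton, ENNReal.ofReal_one, ENNReal.toReal_one]
  · rw [reachProb, if_neg ht, ennsum,
      ENNReal.tsum_toReal_eq (fun _ => ENNReal.ofReal_ne_top)]
    exact tsum_congr fun l =>
      (ENNReal.toReal_ofReal (runProb_nonneg (val_nonneg hval) _)).symm

lemma ennsum_image_cons (hval : gpMC E fin fail val) {s c : S} :
    ∑' l : (List.cons s '' ReachRuns val {fin} c : Set (List S)),
        ENNReal.ofReal (runProb val (l : List S))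
      = ENNReal.ofReal (val s c) * ennsum val fin c := by
  rw [ennsum, ← ENNReal.tsum_mul_left,
    ← Equiv.tsum_eq (Equiv.Set.image (List.cons s) _ (List.cons_injective))
      (fun l : (List.cons s '' ReachRuns val {fin} c : Set (List S)) =>
        ENNReal.ofReal (runProb val (l : List S)))]
  apply tsum_congr
  intro x
  obtain ⟨c', r, hx⟩ : ∃ c' r, (x : List S) = c' :: r := by
    obtain ⟨-, hhead, -⟩ := x.2
    cases hx : (x : List S) with
    | nil => rw [hx] at hhead; simp at hhead
    | cons c' r => exact ⟨c', r, rfl⟩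
  have hc : c = c' := by
    have hhead := x.2.2.1
    rw [hx] at hhead
    symm
    simpa using hhead
  subst hc
  have : ((Equiv.Set.image (List.cons s) (ReachRuns val {fin} c)
      List.cons_injective) x : List S) = s :: (x : List S) := rfl
  rw [this, hx, runProb_cons,
    ENNReal.ofReal_mul (val_nonneg hval s c)]

lemma ennsum_step (hval : gpMC E fin fail val) {s a b : S} (hsfin : s ≠ fin)
    (hab : a ≠ b) (hEa : E s a) (hEb : E s b) (honly : ∀ c, E s c → c = a ∨ c = b) :
    ennsum val fin s
      = ENNReal.ofReal (val s a) * ennsum val fin a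
        + ENNReal.ofReal (val s b) * ennsum val fin b := by
  have hsB : s ∉ ({fin} : Set S) := by simpa using hsfin
  have hset : ReachRuns val {fin} s
      = (List.cons s '' ReachRuns val {fin} a) ∪ (List.cons s '' ReachRuns val {fin} b) := by
    ext l
    constructor
    · intro hl
      obtain ⟨c, r, rfl, hpos, hm⟩ := reachRuns_elim hsB hl
      have hE : E s c := by
        by_contra h
        rw [hval.2.1 s c h] at hpos
        exact lt_irrefl 0 hpos
      rcases honly c hE with rfl | rfl
      · exact Or.inl ⟨c :: r, hm, rfl⟩
      · exact Or.inr ⟨c :: r, hm, rfl⟩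
    · rintro (⟨m, hm, rfl⟩ | ⟨m, hm, rfl⟩)
      · exact reachRuns_cons hsB (hval.1 s a hEa) hm
      · exact reachRuns_cons hsB (hval.1 s b hEb) hm
  have hdisj : Disjoint (List.cons s '' ReachRuns val {fin} a)
      (List.cons s '' ReachRuns val {fin} b) := by
    rw [Set.disjoint_left]
    rintro l ⟨m, hm, rfl⟩ ⟨m', hm', hmm⟩
    have hm2 : m = m' := by simpa using hmm.symm
    subst hm2
    have ha' := hm.2.1
    have hb' := hm'.2.1
    rw [ha'] at hb'
    exact hab (by simpa using hb')
  rw [ennsum, hset,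
    ENNReal.summable.tsum_union_disjoint (f := fun l : List S => ENNReal.ofReal (runProb val l)) hdisj
      ENNReal.summable,
    ennsum_image_cons hval, ennsum_image_cons hval]

lemma step_real (hval : gpMC E fin fail val) (habs : ∀ s', ¬ E fin s' ∧ ¬ E fail s')
    (hne : fin ≠ fail) {s a b : S} (hsfin : s ≠ fin) (hab : a ≠ b)
    (hEa : E s a) (hEb : E s b) (honly : ∀ c, E s c → c = a ∨ c = b) :
    reachProb val {fin} s
      = val s a * reachProb val {fin} a + val s b * reachProb val {fin} b := by
  rw [reachProb_eq_toReal hval habs hne, reachProb_eq_toReal hval habs hne,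
    reachProb_eq_toReal hval habs hne, ennsum_step hval hsfin hab hEa hEb honly,
    ENNReal.toReal_add
      (ENNReal.mul_ne_top ENNReal.ofReal_ne_top (ennsum_ne_top hval habs hne a))
      (ENNReal.mul_ne_top ENNReal.ofReal_ne_top (ennsum_ne_top hval habs hne b)),
    ENNReal.toReal_mul, ENNReal.toReal_mul,
    ENNReal.toReal_ofReal (val_nonneg hval s a), ENNReal.toReal_ofReal (val_nonneg hval s b)]
end Stmt11Aux

-- STATEMENT 11: let `s` be a non-target state with exactly two successors
-- `a ≠ b`.  If for every graph-preserving valuation the value of `s` equals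
-- the value of `b`, then for every graph-preserving valuation the value of
-- `s` also equals the value of `a`.
theorem stmt11 {S : Type*} [Fintype S] (E : S → S → Prop) (fin fail : S)
    (hne : fin ≠ fail)
    (habs : ∀ s', ¬ E fin s' ∧ ¬ E fail s')
    (s a b : S) (hs : s ≠ fin ∧ s ≠ fail) (hab : a ≠ b)
    (hEa : E s a) (hEb : E s b) (honly : ∀ c, E s c → c = a ∨ c = b)
    (hsb : ∀ val, gpMC E fin fail val →
      reachProb val {fin} s = reachProb val {fin} b) :
    ∀ val, gpMC E fin fail val →
      reachProb val {fin} s = reachProb val {fin} a := by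

  classical
  intro val hval
  have hstep := Stmt11Aux.step_real hval habs hne hs.1 hab hEa hEb honly
  have hsum1 : val s a + val s b = 1 := by
    have h1 := hval.2.2 s hs.1 hs.2
    rw [← Finset.sum_subset (Finset.subset_univ ({a, b} : Finset S))
      (fun c _ hc => hval.2.1 s c (fun hE => hc (by
        rcases honly c hE with rfl | rfl <;> simp)))] at h1
    rwa [Finset.sum_pair hab] at h1
  have hPb := hsb val hval
  set Pa := reachProb val {fin} a with hPa'
  set Pb := reachProb val {fin} b with hPb'
  have hxpos := hval.1 s a hEa
  have hy : val s b = 1 - val s a := by linarith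
  rw [hy, hPb] at hstep
  have hmul : val s a * Pa = val s a * Pb := by nlinarith [hstep]
  have hPab : Pa = Pb := mul_left_cancel₀ (ne_of_gt hxpos) hmul
  rw [hPb, hPab]
end

section
/- Let M be a weighted MDP with target states T = {t₀,…,t_n} having weights 0 = ρ(t₀) < … < ρ(t_n), and let N be the MDP obtained by adding fresh absorbing states fail and fin and, from each target tᵢ, a single action leading to fin with probability ρ(tᵢ)/ρ(t_n) and to fail with probability 1 − ρ(tᵢ)/ρ(t_n). Then for every vertex v of M, every valuation val, and every strategy σ: the optimal reachability value of fin from v in N equals (1/ρ(t_n)) times the optimal expected weight from v in M, i.e. Rew*_{N[val]}(v) = (1/ρ(t_n))·Rew*_{M[val]}(v). -/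
/-- Value of a state under a memoryless deterministic strategy `σ`:
`Rew^σ(s) = Σ_{t∈T} ℙ^s[◇t]·ρ(t)` in the induced Markov chain. -/
noncomputable def stratVal {S A : Type*} [Fintype S] (δ : S → A → S → ℝ)
    (T : Finset S) (ρ : S → ℝ) (σ : S → A) (s : S) : ℝ :=
  ∑ t ∈ T, reachProb (fun u u' => δ u (σ u) u') {t} s * ρ t

/-- Value of a nature vertex `(s,a)` under `σ`. -/
noncomputable def stratValN {S A : Type*} [Fintype S] (δ : S → A → S → ℝ)
    (T : Finset S) (ρ : S → ℝ) (σ : S → A) (s : S) (a : A) : ℝ :=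
  ∑ s' : S, δ s a s' * stratVal δ T ρ σ s'

/-- Optimal value of a state. -/
noncomputable def RewStar {S A : Type*} [Fintype S] (δ : S → A → S → ℝ)
    (T : Finset S) (ρ : S → ℝ) (s : S) : ℝ :=
  ⨆ σ : S → A, stratVal δ T ρ σ s

/-- Optimal value of a nature vertex. -/
noncomputable def RewStarN {S A : Type*} [Fintype S] (δ : S → A → S → ℝ)
    (T : Finset S) (ρ : S → ℝ) (s : S) (a : A) : ℝ :=
  ⨆ σ : S → A, stratValN δ T ρ σ s a

/-- Optimal value of a vertex of the MDP graph. -/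
noncomputable def vVal {S A : Type*} [Fintype S] (δ : S → A → S → ℝ)
    (T : Finset S) (ρ : S → ℝ) : (S ⊕ S × A) → ℝ
  | Sum.inl s => RewStar δ T ρ s
  | Sum.inr (s, a) => RewStarN δ T ρ s a

/-- Graph-preserving valuations of a parametric MDP. -/
def GraphPreserving {S A X : Type*} [Fintype S]
    (δ : S → A → S → MvPolynomial X ℝ) (T : Finset S) (val : X → ℝ) : Prop :=
  (∀ s a s', 0 ≤ MvPolynomial.eval val (δ s a s')) ∧
  (∀ s ∉ T, ∀ a, ∑ s' : S, MvPolynomial.eval val (δ s a s') = 1) ∧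
  (∀ s a s', δ s a s' ≠ 0 → MvPolynomial.eval val (δ s a s') ≠ 0)

-- The MDP `N`: states of `M` plus fresh `fail = Sum.inr false` and
-- `fin = Sum.inr true`; each target `t` of `M` gets a single fresh action
-- leading to `fin` with probability `ρ t / w` and to `fail` with probability
-- `1 − ρ t / w`, where `w = ρ(t_n)` is the largest weight.
open Classical in
noncomputable def liftδ {S A : Type*} (δ : S → A → S → ℝ) (T : Finset S)
    (ρ : S → ℝ) (w : ℝ) :
    (S ⊕ Bool) → (A ⊕ Unit) → (S ⊕ Bool) → ℝ
  | Sum.inl s, Sum.inl a, Sum.inl s' => if s ∈ T then 0 else δ s a s'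
  | Sum.inl s, Sum.inr _, Sum.inr true => if s ∈ T then ρ s / w else 0
  | Sum.inl s, Sum.inr _, Sum.inr false => if s ∈ T then 1 - ρ s / w else 0
  | _, _, _ => 0

/-- Targets of `N`. -/
def liftT (S : Type*) [DecidableEq S] : Finset (S ⊕ Bool) :=
  ({Sum.inr false, Sum.inr true} : Finset (S ⊕ Bool))

-- Weights of `N`: `fin` has weight 1, everything else 0.
open Classical in
noncomputable def liftρ (S : Type*) : (S ⊕ Bool) → ℝ :=
  fun v => if v = Sum.inr true then 1 else 0

/-- Embedding of the vertices of `M` into the vertices of `N`. -/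
def liftVert {S A : Type*} : (S ⊕ S × A) → ((S ⊕ Bool) ⊕ (S ⊕ Bool) × (A ⊕ Unit)) :=
  Sum.elim (fun s => Sum.inl (Sum.inl s))
    (fun p => Sum.inr (Sum.inl p.1, Sum.inl p.2))

namespace St14

open scoped ENNReal

variable {S : Type*}

lemma chain'_zip_tail {R : S → S → Prop} :
    ∀ l : List S, l.Chain' R → ∀ p ∈ l.zip l.tail, R p.1 p.2
  | [], _, p, hp => by simp at hp
  | [a], _, p, hp => by simp at hp
  | a :: b :: l, h, p, hp => by
    unfold List.Chain' at h
    rw [List.isChain_cons_cons] at h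
    simp only [List.tail_cons, List.zip_cons_cons, List.mem_cons] at hp
    rcases hp with rfl | hp
    · exact h.1
    · exact chain'_zip_tail (b :: l) h.2 p hp

lemma runProb_single (μ : S → S → ℝ) (a : S) : runProb μ [a] = 1 := rfl

lemma runProb_cons_cons (μ : S → S → ℝ) (a b : S) (l : List S) :
    runProb μ (a :: b :: l) = μ a b * runProb μ (b :: l) := by
  simp [runProb]

lemma runProb_nonneg {μ : S → S → ℝ} {l : List S}
    (h : ∀ p ∈ l.zip l.tail, 0 ≤ μ p.1 p.2) : 0 ≤ runProb μ l := by
  refine List.prod_nonneg ?_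
  intro x hx
  simp only [List.mem_map] at hx
  obtain ⟨p, hp, rfl⟩ := hx
  exact h p hp

lemma runProb_nonneg_of_mem {μ : S → S → ℝ} {B : Set S} {s₀ : S} {l : List S}
    (hl : l ∈ ReachRuns μ B s₀) : 0 ≤ runProb μ l :=
  runProb_nonneg fun p hp => (chain'_zip_tail l hl.2.2.2.2 p hp).le

/-- A run starting inside `B` is the single-state run. -/
lemma eq_singleton_of_mem {μ : S → S → ℝ} {B : Set S} {s₀ : S} {l : List S}
    (hB : s₀ ∈ B) (hl : l ∈ ReachRuns μ B s₀) : l = [s₀] := by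
  obtain ⟨hne, hhd, hdl, -, -⟩ := hl
  match l, hne with
  | [a], _ =>
    simp only [List.head?_cons, Option.some.injEq] at hhd
    rw [hhd]
  | a :: b :: m, _ =>
    simp only [List.head?_cons, Option.some.injEq] at hhd
    subst hhd
    exact absurd hB (hdl a (by simp [List.dropLast]))

lemma singleton_mem {μ : S → S → ℝ} {B : Set S} {s₀ : S} (hB : s₀ ∈ B) :
    [s₀] ∈ ReachRuns μ B s₀ := by
  refine ⟨by simp, by simp, by simp, ⟨s₀, hB, by simp⟩, List.isChain_singleton _⟩

lemma ReachRuns_eq_singleton {μ : S → S → ℝ} {B : Set S} {s₀ : S} (hB : s₀ ∈ B) :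
    ReachRuns μ B s₀ = {[s₀]} := by
  ext l
  constructor
  · exact fun hl => eq_singleton_of_mem hB hl
  · rintro rfl; exact singleton_mem hB

lemma cons_elim {μ : S → S → ℝ} {B : Set S} {s₀ : S} {l : List S}
    (hB : s₀ ∉ B) (hl : l ∈ ReachRuns μ B s₀) :
    ∃ b m, l = s₀ :: b :: m ∧ 0 < μ s₀ b ∧ (b :: m) ∈ ReachRuns μ B b := by
  obtain ⟨hne, hhd, hdl, ⟨t, htB, hlast⟩, hch⟩ := hl
  match l, hne with
  | [a], _ =>
    simp only [List.head?_cons, Option.some.injEq] at hhd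
    subst hhd
    simp only [List.getLast?_singleton, Option.some.injEq] at hlast
    exact absurd (hlast ▸ htB) hB
  | a :: b :: m, _ =>
    simp only [List.head?_cons, Option.some.injEq] at hhd
    subst hhd
    unfold List.Chain' at hch
    rw [List.isChain_cons_cons] at hch
    refine ⟨b, m, rfl, hch.1, ?_, by simp, ?_, ⟨t, htB, by simpa using hlast⟩, hch.2⟩
    · simp
    · intro x hx
      exact hdl x (by simpa [List.dropLast] using Or.inr hx)

lemma cons_intro {μ : S → S → ℝ} {B : Set S} {s₀ b : S} {m : List S}
    (hB : s₀ ∉ B) (he : 0 < μ s₀ b) (hl : (b :: m) ∈ ReachRuns μ B b) :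
    s₀ :: b :: m ∈ ReachRuns μ B s₀ := by
  obtain ⟨-, -, hdl, ⟨t, htB, hlast⟩, hch⟩ := hl
  refine ⟨by simp, by simp, ?_, ⟨t, htB, by simpa using hlast⟩, List.isChain_cons_cons.2 ⟨he, hch⟩⟩
  intro x hx
  simp only [List.dropLast, List.mem_cons] at hx
  rcases hx with rfl | hx
  · exact hB
  · exact hdl x (by simpa [List.dropLast] using hx)


/-- ENNReal version of reach probability. -/
noncomputable def ennReach (μ : S → S → ℝ) (B : Set S) (s₀ : S) : ℝ≥0∞ :=
  ∑' l : ReachRuns μ B s₀, ENNReal.ofReal (runProb μ (l : List S))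

lemma tsum_toReal_ofReal {ι : Type*} (f : ι → ℝ) (hf : ∀ i, 0 ≤ f i) :
    ∑' i, f i = (∑' i, ENNReal.ofReal (f i)).toReal := by
  by_cases h : Summable f
  · rw [← ENNReal.ofReal_tsum_of_nonneg hf h, ENNReal.toReal_ofReal (tsum_nonneg hf)]
  · rw [tsum_eq_zero_of_not_summable h]
    have : ∑' i, ENNReal.ofReal (f i) = ⊤ := by
      by_contra hne
      exact h (((ENNReal.summable_toReal hne).congr) fun i => ENNReal.toReal_ofReal (hf i))
    simp [this]

lemma reachProb_eq_toReal (μ : S → S → ℝ) (B : Set S) (s₀ : S) :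
    reachProb μ B s₀ = (ennReach μ B s₀).toReal := by
  classical
  by_cases hs : s₀ ∈ B
  · rw [reachProb, if_pos hs, ennReach, ReachRuns_eq_singleton hs]
    rw [tsum_singleton [s₀] (fun l => ENNReal.ofReal (runProb μ l))]
    rw [runProb_single, ENNReal.ofReal_one, ENNReal.toReal_one]
  · rw [reachProb, if_neg hs, ennReach]
    exact tsum_toReal_ofReal _ fun i => runProb_nonneg_of_mem i.2

/-- Kraft-type bound: finite sums of run probabilities are at most 1. -/
lemma kraft_aux [Fintype S] [DecidableEq S] {μ : S → S → ℝ} (h0 : ∀ a b, 0 ≤ μ a b)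
    (hsum : ∀ u, (∃ v, 0 < μ u v) → ∑ v, μ u v ≤ 1) (B : Set S) :
    ∀ n (F : Finset (List S)) (s₀ : S), (∀ l ∈ F, l ∈ ReachRuns μ B s₀) →
      (∑ l ∈ F, l.length ≤ n) →
      ∑ l ∈ F, ENNReal.ofReal (runProb μ l) ≤ 1 := by
  intro n
  induction n with
  | zero =>
    intro F s₀ hF hlen
    have : F = ∅ := by
      rcases Finset.eq_empty_or_nonempty F with h | ⟨l, hl⟩
      · exact h
      · exfalso
        have h1 : 1 ≤ l.length := List.length_pos_iff.2 (hF l hl).1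
        have : 1 ≤ ∑ l ∈ F, l.length := le_trans h1 (Finset.single_le_sum (by simp) hl)
        omega
    simp [this]
  | succ n ih =>
    intro F s₀ hF hlen
    rcases Finset.eq_empty_or_nonempty F with rfl | ⟨l₀, hl₀⟩
    · simp
    by_cases hB : s₀ ∈ B
    · -- every run is [s₀]
      have hsub : F ⊆ {[s₀]} := fun l hl => by
        simp [eq_singleton_of_mem hB (hF l hl)]
      calc ∑ l ∈ F, ENNReal.ofReal (runProb μ l)
          ≤ ∑ l ∈ ({[s₀]} : Finset (List S)), ENNReal.ofReal (runProb μ l) :=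
            Finset.sum_le_sum_of_subset hsub
        _ = 1 := by simp [runProb_single]
    · -- group runs by their second state
      haveI : Inhabited S := ⟨s₀⟩
      set key : List S → S := fun l => l.tail.headI with hkey
      have hstruct : ∀ l ∈ F, l = s₀ :: key l :: l.tail.tail ∧ 0 < μ s₀ (key l) ∧
          (key l :: l.tail.tail) ∈ ReachRuns μ B (key l) := by
        intro l hl
        obtain ⟨b, m, rfl, he, hm⟩ := cons_elim hB (hF l hl)
        have hkv : key (s₀ :: b :: m) = b := by simp [hkey]
        rw [hkv]
        exact ⟨rfl, he, hm⟩
      have hfib := Finset.sum_fiberwise_of_maps_to (s := F) (t := (Finset.univ : Finset S))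
        (g := key) (fun l _ => Finset.mem_univ (key l))
        (fun l => ENNReal.ofReal (runProb μ l))
      rw [← hfib]
      have hbound : ∀ v : S, ∑ l ∈ F.filter (fun l => key l = v), ENNReal.ofReal (runProb μ l)
          ≤ ENNReal.ofReal (μ s₀ v) := by
        intro v
        set Fv : Finset (List S) := (F.filter (fun l => key l = v)).image List.tail with hFv
        have hinj : Set.InjOn List.tail ((F.filter (fun l => key l = v) : Finset (List S)) : Set (List S)) := by
          intro l1 h1 l2 h2 htl
          rw [Finset.mem_coe] at h1 h2
          have e1 := (hstruct l1 (Finset.mem_filter.1 h1).1).1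
          have e2 := (hstruct l2 (Finset.mem_filter.1 h2).1).1
          have t1 : l1 = s₀ :: l1.tail := by rw [e1]; simp
          have t2 : l2 = s₀ :: l2.tail := by rw [e2]; simp
          rw [t1, t2, htl]
        have himg : ∑ l ∈ F.filter (fun l => key l = v), ENNReal.ofReal (runProb μ l)
            = ∑ m ∈ Fv, ENNReal.ofReal (μ s₀ v) * ENNReal.ofReal (runProb μ m) := by
          rw [hFv, Finset.sum_image (fun l h1 l2 h2 e => hinj h1 h2 e)]
          refine Finset.sum_congr rfl fun l hl => ?_
          have hk := (Finset.mem_filter.1 hl).2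
          obtain ⟨e, he, -⟩ := hstruct l (Finset.mem_filter.1 hl).1
          conv_lhs => rw [e]
          rw [runProb_cons_cons, ENNReal.ofReal_mul (h0 _ _), hk]
          have etail : l.tail = v :: l.tail.tail := by
            conv_lhs => rw [e]
            rw [List.tail_cons, hk]
          rw [congrArg (runProb μ) etail]
        rw [himg, ← Finset.mul_sum]
        have hFvsub : ∀ m ∈ Fv, m ∈ ReachRuns μ B v := by
          intro m hm
          rw [hFv, Finset.mem_image] at hm
          obtain ⟨l, hl, rfl⟩ := hm
          obtain ⟨hl1, hl2⟩ := Finset.mem_filter.1 hl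
          obtain ⟨e, -, hmem⟩ := hstruct l hl1
          have : l.tail = key l :: l.tail.tail := congrArg List.tail e
          rw [this, hl2]
          rw [hl2] at hmem
          exact hmem
        have hFvlen : ∑ m ∈ Fv, m.length ≤ n := by
          rcases Finset.eq_empty_or_nonempty (F.filter (fun l => key l = v)) with he | ⟨l₁, hl₁⟩
          · simp [hFv, he]
          have hcard : 1 ≤ (F.filter (fun l => key l = v)).card :=
            Finset.card_pos.2 ⟨l₁, hl₁⟩
          have hsum1 : ∑ l ∈ F.filter (fun l => key l = v), l.length ≤ n + 1 :=
            le_trans (Finset.sum_le_sum_of_subset (Finset.filter_subset _ _)) hlen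
          have hlen1 : ∀ l ∈ F.filter (fun l => key l = v), 1 ≤ l.length := by
            intro l hl
            obtain ⟨e, -, -⟩ := hstruct l (Finset.mem_filter.1 hl).1
            rw [e]; simp
          have himg2 : ∑ m ∈ Fv, m.length
              = ∑ l ∈ F.filter (fun l => key l = v), l.tail.length := by
            rw [hFv, Finset.sum_image (fun l h1 l2 h2 e => hinj h1 h2 e)]
          have htl : ∀ l ∈ F.filter (fun l => key l = v), l.tail.length = l.length - 1 := by
            intro l hl; simp [List.length_tail]
          rw [himg2, Finset.sum_congr rfl htl, Finset.sum_tsub_distrib _ hlen1]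
          simp only [Finset.sum_const, smul_eq_mul, mul_one]
          omega
        calc ENNReal.ofReal (μ s₀ v) * ∑ m ∈ Fv, ENNReal.ofReal (runProb μ m)
            ≤ ENNReal.ofReal (μ s₀ v) * 1 :=
              mul_le_mul_right (ih Fv v hFvsub hFvlen) _
          _ = ENNReal.ofReal (μ s₀ v) := mul_one _
      calc ∑ v : S, ∑ l ∈ F.filter (fun l => key l = v), ENNReal.ofReal (runProb μ l)
          ≤ ∑ v : S, ENNReal.ofReal (μ s₀ v) := Finset.sum_le_sum fun v _ => hbound v
        _ = ENNReal.ofReal (∑ v : S, μ s₀ v) :=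
            (ENNReal.ofReal_sum_of_nonneg fun v _ => h0 s₀ v).symm
        _ ≤ ENNReal.ofReal 1 := by
            apply ENNReal.ofReal_le_ofReal
            exact hsum s₀ ⟨key l₀, (hstruct l₀ hl₀).2.1⟩
        _ = 1 := ENNReal.ofReal_one


lemma ennReach_le_one [Fintype S] {μ : S → S → ℝ} (h0 : ∀ a b, 0 ≤ μ a b)
    (hsum : ∀ u, (∃ v, 0 < μ u v) → ∑ v, μ u v ≤ 1) (B : Set S) (s₀ : S) :
    ennReach μ B s₀ ≤ 1 := by
  classical
  rw [ennReach, ENNReal.tsum_eq_iSup_sum]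
  refine iSup_le fun F => ?_
  have := kraft_aux h0 hsum B (∑ l ∈ F.image Subtype.val, l.length)
    (F.image Subtype.val) s₀ (fun l hl => by
      rw [Finset.mem_image] at hl; obtain ⟨x, -, rfl⟩ := hl; exact x.2) le_rfl
  rwa [Finset.sum_image (fun x _ y _ h => Subtype.ext h)] at this

lemma ennReach_lt_top [Fintype S] {μ : S → S → ℝ} (h0 : ∀ a b, 0 ≤ μ a b)
    (hsum : ∀ u, (∃ v, 0 < μ u v) → ∑ v, μ u v ≤ 1) (B : Set S) (s₀ : S) :
    ennReach μ B s₀ ≠ ⊤ :=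
  fun h => by simpa [h] using ennReach_le_one h0 hsum B s₀

lemma runProb_mono {μ₁ μ₂ : S → S → ℝ} (h0 : ∀ a b, 0 ≤ μ₁ a b)
    (hle : ∀ a b, μ₁ a b ≤ μ₂ a b) (l : List S) :
    runProb μ₁ l ≤ runProb μ₂ l := by
  rw [runProb, runProb]
  generalize l.zip l.tail = L
  induction L with
  | nil => simp
  | cons p L ihL =>
    simp only [List.map_cons, List.prod_cons]
    have hP1 : (0:ℝ) ≤ (L.map fun p => μ₁ p.1 p.2).prod := by
      refine List.prod_nonneg ?_
      intro x hx
      simp only [List.mem_map] at hx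
      obtain ⟨q, -, rfl⟩ := hx
      exact h0 _ _
    exact mul_le_mul (hle _ _) ihL hP1 (le_trans (h0 _ _) (hle _ _))

lemma ennReach_mono {μ₁ μ₂ : S → S → ℝ} (h0 : ∀ a b, 0 ≤ μ₁ a b)
    (hle : ∀ a b, μ₁ a b ≤ μ₂ a b) (B : Set S) (s₀ : S) :
    ennReach μ₁ B s₀ ≤ ennReach μ₂ B s₀ := by
  have hsub : ReachRuns μ₁ B s₀ ⊆ ReachRuns μ₂ B s₀ := by
    rintro l ⟨h1, h2, h3, h4, h5⟩
    exact ⟨h1, h2, h3, h4, h5.imp fun a b h => lt_of_lt_of_le h (hle a b)⟩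
  calc ennReach μ₁ B s₀
      ≤ ∑' l : ReachRuns μ₁ B s₀, ENNReal.ofReal (runProb μ₂ (l : List S)) :=
        ENNReal.tsum_le_tsum fun l => ENNReal.ofReal_le_ofReal (runProb_mono h0 hle _)
    _ ≤ ennReach μ₂ B s₀ := by
        refine Summable.tsum_le_tsum_of_inj (Set.inclusion hsub) (Set.inclusion_injective hsub)
          (fun _ _ => zero_le ..) (fun _ => le_rfl) ENNReal.summable ENNReal.summable


open Classical in
/-- The Markov chain on `S ⊕ Bool` induced by the lifted MDP. -/
noncomputable def chainN (μ : S → S → ℝ) (T : Finset S) (ρ : S → ℝ) (w : ℝ) :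
    (S ⊕ Bool) → (S ⊕ Bool) → ℝ
  | Sum.inl u, Sum.inl u' => if u ∈ T then 0 else μ u u'
  | Sum.inl u, Sum.inr true => if u ∈ T then ρ u / w else 0
  | Sum.inl u, Sum.inr false => if u ∈ T then 1 - ρ u / w else 0
  | Sum.inr _, _ => 0

section chainN
variable {μ : S → S → ℝ} {T : Finset S} {ρ : S → ℝ} {w : ℝ}

open Classical in
lemma chainN_inl_inl (u u' : S) :
    chainN μ T ρ w (Sum.inl u) (Sum.inl u') = if u ∈ T then 0 else μ u u' := by
  simp [chainN]

open Classical in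
lemma chainN_inl_fin (u : S) :
    chainN μ T ρ w (Sum.inl u) (Sum.inr true) = if u ∈ T then ρ u / w else 0 := by
  simp [chainN]

open Classical in
lemma chainN_inl_fail (u : S) :
    chainN μ T ρ w (Sum.inl u) (Sum.inr false) = if u ∈ T then 1 - ρ u / w else 0 := by
  simp [chainN]

lemma chainN_inr (b : Bool) (x : S ⊕ Bool) : chainN μ T ρ w (Sum.inr b) x = 0 := by
  cases x <;> simp [chainN]

open Classical in
lemma runProb_phi (hsink : ∀ t ∈ T, ∀ b, μ t b = 0) :
    ∀ (l : List S) (t : S), l.getLast? = some t →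
    l.Chain' (fun a b => 0 < μ a b) →
    runProb (chainN μ T ρ w) (l.map Sum.inl ++ [Sum.inr true])
      = runProb μ l * (if t ∈ T then ρ t / w else 0)
  | [], t, h, _ => by simp at h
  | [a], t, h, _ => by
    have h' : a = t := by simpa using h
    subst h'
    show runProb (chainN μ T ρ w) [Sum.inl a, Sum.inr true] = _
    rw [runProb_cons_cons, runProb_single, runProb_single, chainN_inl_fin]
    ring
  | a :: b :: l, t, h, hch => by
    unfold List.Chain' at hch
    rw [List.isChain_cons_cons] at hch
    have ha : a ∉ T := fun haT => by
      have := hsink a haT b; rw [this] at hch; exact lt_irrefl 0 hch.1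
    have hlast : (b :: l).getLast? = some t := by
      rwa [List.getLast?_cons_cons] at h
    have ih := runProb_phi hsink (b :: l) t hlast hch.2
    show runProb (chainN μ T ρ w)
        (Sum.inl a :: (Sum.inl b :: List.map Sum.inl l ++ [Sum.inr true])) = _
    rw [show (Sum.inl b :: List.map Sum.inl l ++ [Sum.inr true] :
          List (S ⊕ Bool)) = (b :: l).map Sum.inl ++ [Sum.inr true] by simp,
      show runProb (chainN μ T ρ w)
          (Sum.inl a :: ((b :: l).map Sum.inl ++ [Sum.inr true]))
        = chainN μ T ρ w (Sum.inl a) (Sum.inl b) *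
          runProb (chainN μ T ρ w) ((b :: l).map Sum.inl ++ [Sum.inr true]) from
        runProb_cons_cons _ _ _ _,
      ih, chainN_inl_inl, if_neg ha, runProb_cons_cons]
    ring

/-- Forward direction: every run to `fin` in the lifted chain comes from a run
of the base chain to some target. -/
lemma run_lift_elim :
    ∀ (k : ℕ) (u : S) (L : List (S ⊕ Bool)), L.length ≤ k →
      L ∈ ReachRuns (chainN μ T ρ w) {Sum.inr true} (Sum.inl u) →
      ∃ t, (t ∈ T ∧ 0 < ρ t / w) ∧
        ∃ l ∈ ReachRuns μ {t} u, L = l.map Sum.inl ++ [Sum.inr true] := by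
  intro k
  induction k with
  | zero =>
    intro u L hlen hL
    exact absurd (List.length_eq_zero_iff.1 (Nat.le_zero.1 hlen)) hL.1
  | succ k ih =>
    intro u L hlen hL
    have hnB : (Sum.inl u : S ⊕ Bool) ∉ ({Sum.inr true} : Set (S ⊕ Bool)) := by simp
    obtain ⟨b, m, rfl, he, hm⟩ := cons_elim hnB hL
    match b with
    | Sum.inr true =>
      rw [chainN_inl_fin] at he
      by_cases huT : u ∈ T
      · rw [if_pos huT] at he
        have hmnil : (Sum.inr true :: m : List (S ⊕ Bool)) = [Sum.inr true] :=
          eq_singleton_of_mem (Set.mem_singleton _) hm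
        refine ⟨u, ⟨huT, he⟩, [u], singleton_mem (Set.mem_singleton _), ?_⟩
        rw [hmnil]; rfl
      · rw [if_neg huT] at he; exact absurd he (lt_irrefl 0)
    | Sum.inr false =>
      exfalso
      have hnB' : (Sum.inr false : S ⊕ Bool) ∉ ({Sum.inr true} : Set (S ⊕ Bool)) := by simp
      obtain ⟨c, m', -, he', -⟩ := cons_elim hnB' hm
      rw [chainN_inr] at he'
      exact lt_irrefl 0 he'
    | Sum.inl u' =>
      rw [chainN_inl_inl] at he
      by_cases huT : u ∈ T
      · rw [if_pos huT] at he; exact absurd he (lt_irrefl 0)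
      rw [if_neg huT] at he
      have hlen' : (Sum.inl u' :: m : List (S ⊕ Bool)).length ≤ k := by
        simp only [List.length_cons] at hlen ⊢; omega
      obtain ⟨t, htp, l, hlmem, hleq⟩ := ih u' _ hlen' hm
      match l, hlmem.1, hlmem.2.1 with
      | a :: l', _, hhd =>
        simp only [List.head?_cons, Option.some.injEq] at hhd
        subst hhd
        have hunott : u ∉ ({t} : Set S) := by
          simp only [Set.mem_singleton_iff]
          rintro rfl
          exact huT htp.1
        refine ⟨t, htp, u :: a :: l', cons_intro hunott he hlmem, ?_⟩
        have hm' : m = List.map Sum.inl l' ++ [Sum.inr true] := by simpa using hleq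
        simp [hm']

/-- Backward direction. -/
lemma run_lift_intro (hsink : ∀ t ∈ T, ∀ b, μ t b = 0) {t : S} (htT : t ∈ T)
    (htpos : 0 < ρ t / w) {s : S} {l : List S} (hl : l ∈ ReachRuns μ ({t} : Set S) s) :
    l.map Sum.inl ++ [Sum.inr true]
      ∈ ReachRuns (chainN μ T ρ w) {Sum.inr true} (Sum.inl s) := by
  obtain ⟨hne, hhd, hdl, ⟨t', ht', hlast⟩, hch⟩ := hl
  rw [Set.mem_singleton_iff] at ht'
  subst ht'
  refine ⟨by simp, ?_, ?_, ⟨Sum.inr true, rfl, ?_⟩, ?_⟩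
  · match l, hne with
    | a :: l', _ =>
      simp only [List.head?_cons, Option.some.injEq] at hhd
      subst hhd
      rfl
  · rw [List.dropLast_concat]
    intro x hx
    simp only [List.mem_map] at hx
    obtain ⟨y, -, rfl⟩ := hx
    simp
  · rw [List.getLast?_concat]
  · unfold List.Chain' at hch ⊢
    rw [List.isChain_append]
    refine ⟨?_, List.isChain_singleton _, ?_⟩
    · rw [List.isChain_map]
      refine hch.imp ?_
      intro a b hab
      have haT : a ∉ T := fun haT => by
        rw [hsink a haT b] at hab; exact lt_irrefl 0 hab
      rw [chainN_inl_inl, if_neg haT]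
      exact hab
    · intro x hx y hy
      simp only [List.head?_cons, Option.mem_def, Option.some.injEq] at hy
      subst hy
      rw [List.getLast?_map] at hx
      simp only [Option.mem_def, Option.map_eq_some_iff] at hx
      obtain ⟨z, hz, rfl⟩ := hx
      rw [hlast, Option.some.injEq] at hz
      subst hz
      rw [chainN_inl_fin, if_pos htT]
      exact htpos


lemma phi_injective : Function.Injective
    (fun l : List S => l.map Sum.inl ++ [(Sum.inr true : S ⊕ Bool)]) := by
  intro l₁ l₂ h
  simp only at h
  exact List.map_injective_iff.2 Sum.inl_injective (List.append_cancel_right h)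

lemma getLast_of_mem {μ' : S → S → ℝ} {t s : S} {l : List S}
    (hl : l ∈ ReachRuns μ' ({t} : Set S) s) : l.getLast? = some t := by
  obtain ⟨-, -, -, ⟨t', ht', hlast⟩, -⟩ := hl
  rw [Set.mem_singleton_iff] at ht'
  subst ht'
  exact hlast

open Classical in
lemma ennReach_chainN [Fintype S] (hsink : ∀ t ∈ T, ∀ b, μ t b = 0) (s : S) :
    ennReach (chainN μ T ρ w) {Sum.inr true} (Sum.inl s)
      = ∑ t ∈ T, ENNReal.ofReal (ρ t / w) * ennReach μ ({t} : Set S) s := by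
  classical
  set Φ : List S → List (S ⊕ Bool) :=
    fun l => l.map Sum.inl ++ [(Sum.inr true : S ⊕ Bool)] with hΦ
  set T' : Finset S := T.filter (fun t => 0 < ρ t / w) with hT'
  have hset : ReachRuns (chainN μ T ρ w) {Sum.inr true} (Sum.inl s)
      = ⋃ t ∈ T', Φ '' ReachRuns μ ({t} : Set S) s := by
    ext L
    constructor
    · intro hL
      obtain ⟨t, ⟨htT, htpos⟩, l, hlmem, rfl⟩ :=
        run_lift_elim L.length s L le_rfl hL
      have htmem : t ∈ T' := by rw [hT', Finset.mem_filter]; exact ⟨htT, htpos⟩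
      exact Set.mem_biUnion htmem ⟨l, hlmem, rfl⟩
    · intro hL
      simp only [Set.mem_iUnion] at hL
      obtain ⟨t, htT', l, hlmem, rfl⟩ := hL
      rw [hT', Finset.mem_filter] at htT'
      exact run_lift_intro hsink htT'.1 htT'.2 hlmem
  have hdisj : (↑T' : Set S).Pairwise
      (Function.onFun Disjoint fun t => Φ '' ReachRuns μ ({t} : Set S) s) := by
    intro t₁ h₁ t₂ h₂ hne
    rw [Function.onFun, Set.disjoint_left]
    rintro L ⟨l₁, hl₁, rfl⟩ ⟨l₂, hl₂, hEq⟩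
    have : l₂ = l₁ := phi_injective hEq
    subst this
    have e1 := getLast_of_mem hl₁
    have e2 := getLast_of_mem hl₂
    rw [e1, Option.some.injEq] at e2
    exact hne e2
  have hbu := Summable.tsum_finset_bUnion_disjoint
    (f := fun L => ENNReal.ofReal (runProb (chainN μ T ρ w) L)) hdisj
    (fun i _ => ENNReal.summable)
  rw [ennReach, hset, hbu]
  rw [Finset.sum_subset (Finset.filter_subset _ T)]
  · refine Finset.sum_congr rfl fun t ht => ?_
    have htT : t ∈ T := ht
    have hΦinj : Set.InjOn Φ (ReachRuns μ ({t} : Set S) s) :=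
      phi_injective.injOn
    have himg := tsum_image (g := Φ)
      (f := fun L => ENNReal.ofReal (runProb (chainN μ T ρ w) L)) hΦinj
    rw [himg]
    have hterm : ∀ l : ReachRuns μ ({t} : Set S) s,
        ENNReal.ofReal (runProb (chainN μ T ρ w) (Φ (l : List S)))
          = ENNReal.ofReal (runProb μ (l : List S)) * ENNReal.ofReal (ρ t / w) := by
      rintro ⟨l, hl⟩
      have := runProb_phi (w := w) (ρ := ρ) hsink l t (getLast_of_mem hl) hl.2.2.2.2
      simp only [hΦ]
      rw [this, if_pos htT, ENNReal.ofReal_mul (runProb_nonneg_of_mem hl)]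
    calc (∑' l : ReachRuns μ ({t} : Set S) s,
            ENNReal.ofReal (runProb (chainN μ T ρ w) (Φ (l : List S))))
        = ∑' l : ReachRuns μ ({t} : Set S) s,
            ENNReal.ofReal (runProb μ (l : List S)) * ENNReal.ofReal (ρ t / w) :=
          tsum_congr hterm
      _ = ENNReal.ofReal (ρ t / w) * ennReach μ ({t} : Set S) s := by
          rw [ENNReal.tsum_mul_right, ennReach, mul_comm]
  · intro t htT htT'
    have hnpos : ¬ 0 < ρ t / w := fun hp => htT' (Finset.mem_filter.2 ⟨htT, hp⟩)
    refine ENNReal.tsum_eq_zero.2 ?_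
    rintro ⟨L, hLmem⟩
    obtain ⟨l, hl, rfl⟩ := hLmem
    simp only [hΦ]
    rw [runProb_phi hsink l t (getLast_of_mem hl) hl.2.2.2.2, if_pos htT]
    exact ENNReal.ofReal_eq_zero.2
      (mul_nonpos_of_nonneg_of_nonpos (runProb_nonneg_of_mem hl) (le_of_not_gt hnpos))

end chainN


section strat

variable {S A : Type*} [Fintype S] [DecidableEq S] [Fintype A] [Nonempty A]

open Classical in
/-- Canonical lift of a strategy of `M` to a strategy of `N`. -/
noncomputable def liftStrat (T : Finset S) (σ : S → A) : (S ⊕ Bool) → (A ⊕ Unit) :=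
  fun v => match v with
  | Sum.inl s => if s ∈ T then Sum.inr () else Sum.inl (σ s)
  | Sum.inr _ => Sum.inr ()

/-- Projection of a strategy of `N` to a strategy of `M`. -/
noncomputable def downStrat (τ : (S ⊕ Bool) → (A ⊕ Unit)) : S → A :=
  fun s => match τ (Sum.inl s) with
  | Sum.inl a => a
  | Sum.inr _ => Classical.arbitrary A

variable {μA : S → A → S → ℝ} {T : Finset S} {ρ : S → ℝ} {w : ℝ}

lemma liftδ_inl_inl (u : S) (a : A) (y : S) :
    liftδ μA T ρ w (Sum.inl u) (Sum.inl a) (Sum.inl y) = if u ∈ T then 0 else μA u a y := by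
  simp [liftδ]

lemma liftδ_inl_inl_inr (u : S) (a : A) (b : Bool) :
    liftδ μA T ρ w (Sum.inl u) (Sum.inl a) (Sum.inr b) = 0 := by
  cases b <;> simp [liftδ]

lemma liftδ_fresh_fin (u : S) (c : Unit) :
    liftδ μA T ρ w (Sum.inl u) (Sum.inr c) (Sum.inr true) = if u ∈ T then ρ u / w else 0 := by
  simp [liftδ]

lemma liftδ_fresh_fail (u : S) (c : Unit) :
    liftδ μA T ρ w (Sum.inl u) (Sum.inr c) (Sum.inr false)
      = if u ∈ T then 1 - ρ u / w else 0 := by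
  simp [liftδ]

lemma liftδ_fresh_inl (u : S) (c : Unit) (y : S) :
    liftδ μA T ρ w (Sum.inl u) (Sum.inr c) (Sum.inl y) = 0 := by
  simp [liftδ]

lemma liftδ_inr (b : Bool) (c : A ⊕ Unit) (y : S ⊕ Bool) :
    liftδ μA T ρ w (Sum.inr b) c y = 0 := by
  rcases c with c | c <;> rcases y with y | y <;> first | rfl | (cases y <;> rfl)

/-- The chain induced on `N` by the canonical lift of `σ` is `chainN`. -/
lemma lift_eq (σ : S → A) :
    (fun u u' => liftδ μA T ρ w u (liftStrat T σ u) u')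
      = chainN (fun x y => μA x (σ x) y) T ρ w := by
  funext u u'
  rcases u with u | b
  · rcases u' with u' | b'
    · by_cases huT : u ∈ T
      · rw [show liftStrat T σ (Sum.inl u) = Sum.inr () by simp [liftStrat, huT],
          liftδ_fresh_inl, chainN_inl_inl, if_pos huT]
      · rw [show liftStrat T σ (Sum.inl u) = Sum.inl (σ u) by simp [liftStrat, huT],
          liftδ_inl_inl, chainN_inl_inl]
        split_ifs <;> rfl
    · by_cases huT : u ∈ T
      · rw [show liftStrat T σ (Sum.inl u) = Sum.inr () by simp [liftStrat, huT]]
        cases b'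
        · rw [liftδ_fresh_fail, chainN_inl_fail]
          split_ifs <;> rfl
        · rw [liftδ_fresh_fin, chainN_inl_fin]
          split_ifs <;> rfl
      · rw [show liftStrat T σ (Sum.inl u) = Sum.inl (σ u) by simp [liftStrat, huT],
          liftδ_inl_inl_inr]
        cases b'
        · rw [chainN_inl_fail, if_neg huT]
        · rw [chainN_inl_fin, if_neg huT]
  · rw [liftδ_inr, chainN_inr]

lemma chainN_nonneg {μ : S → S → ℝ} (hμ0 : ∀ a b, 0 ≤ μ a b)
    (hρ0 : ∀ u ∈ T, 0 ≤ ρ u) (hρw : ∀ u ∈ T, ρ u ≤ w) (hw0 : 0 ≤ w) :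
    ∀ x y, 0 ≤ chainN μ T ρ w x y := by
  have hdiv : ∀ u ∈ T, 0 ≤ ρ u / w := fun u hu => div_nonneg (hρ0 u hu) hw0
  have hdiv1 : ∀ u ∈ T, ρ u / w ≤ 1 := by
    intro u hu
    rcases eq_or_lt_of_le hw0 with hw | hw
    · rw [← hw, div_zero]; norm_num
    · exact (div_le_one hw).2 (hρw u hu)
  rintro (u | b) (y | b')
  · rw [chainN_inl_inl]; split_ifs with h
    · exact le_rfl
    · exact hμ0 _ _
  · cases b'
    · rw [chainN_inl_fail]; split_ifs with h
      · linarith [hdiv1 u h]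
      · exact le_rfl
    · rw [chainN_inl_fin]; split_ifs with h
      · exact hdiv u h
      · exact le_rfl
  · rw [chainN_inr]
  · rw [chainN_inr]

lemma chainN_row {μ : S → S → ℝ} (hrow : ∀ u ∉ T, ∑ u', μ u u' = 1)
    (hsinkμ : ∀ u ∈ T, ∀ v, μ u v = 0) :
    ∀ x, (∃ y, 0 < chainN μ T ρ w x y) → ∑ y, chainN μ T ρ w x y ≤ 1 := by
  rintro (u | b) -
  · rw [Fintype.sum_sum_type]
    by_cases huT : u ∈ T
    · have h1 : ∀ y : S, chainN μ T ρ w (Sum.inl u) (Sum.inl y) = 0 := fun y => by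
        rw [chainN_inl_inl, if_pos huT]
      have h2 : ∑ b : Bool, chainN μ T ρ w (Sum.inl u) (Sum.inr b) = 1 := by
        rw [Fintype.sum_bool, chainN_inl_fin, chainN_inl_fail, if_pos huT, if_pos huT]
        ring
      rw [Finset.sum_eq_zero (fun y _ => h1 y), h2]
      norm_num
    · have h1 : ∑ y : S, chainN μ T ρ w (Sum.inl u) (Sum.inl y) = 1 := by
        rw [← hrow u huT]
        exact Finset.sum_congr rfl fun y _ => by rw [chainN_inl_inl, if_neg huT]
      have h2 : ∀ b : Bool, chainN μ T ρ w (Sum.inl u) (Sum.inr b) = 0 := by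
        intro b; cases b
        · rw [chainN_inl_fail, if_neg huT]
        · rw [chainN_inl_fin, if_neg huT]
      rw [h1, Finset.sum_eq_zero (fun b _ => h2 b)]
      norm_num
  · rw [Finset.sum_eq_zero (fun y _ => chainN_inr _ y)]
    norm_num

lemma rowM {μ : S → S → ℝ} (hrow : ∀ u ∉ T, ∑ u', μ u u' = 1)
    (hsinkμ : ∀ u ∈ T, ∀ v, μ u v = 0) :
    ∀ u, (∃ v, 0 < μ u v) → ∑ v, μ u v ≤ 1 := by
  intro u ⟨v, hv⟩
  by_cases huT : u ∈ T
  · rw [hsinkμ u huT v] at hv; exact absurd hv (lt_irrefl 0)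
  · rw [hrow u huT]

lemma lift_nonneg (h0 : ∀ s a s', 0 ≤ μA s a s') (hρ0 : ∀ u ∈ T, 0 ≤ ρ u)
    (hρw : ∀ u ∈ T, ρ u ≤ w) (hw0 : 0 ≤ w) (τ : (S ⊕ Bool) → (A ⊕ Unit)) :
    ∀ u u', 0 ≤ liftδ μA T ρ w u (τ u) u' := by
  have hdiv : ∀ u ∈ T, 0 ≤ ρ u / w := fun u hu => div_nonneg (hρ0 u hu) hw0
  have hdiv1 : ∀ u ∈ T, ρ u / w ≤ 1 := by
    intro u hu
    rcases eq_or_lt_of_le hw0 with hw | hw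
    · rw [← hw, div_zero]; norm_num
    · exact (div_le_one hw).2 (hρw u hu)
  rintro (u | b) u'
  · rcases hτ : τ (Sum.inl u) with a | c
    · rcases u' with u' | b'
      · rw [liftδ_inl_inl]; split_ifs with h
        · exact le_rfl
        · exact h0 _ _ _
      · rw [liftδ_inl_inl_inr]
    · rcases u' with u' | b'
      · rw [liftδ_fresh_inl]
      · cases b'
        · rw [liftδ_fresh_fail]; split_ifs with h
          · linarith [hdiv1 u h]
          · exact le_rfl
        · rw [liftδ_fresh_fin]; split_ifs with h
          · exact hdiv u h
          · exact le_rfl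
  · rw [liftδ_inr]

lemma lift_le (h0 : ∀ s a s', 0 ≤ μA s a s') (hρ0 : ∀ u ∈ T, 0 ≤ ρ u)
    (hρw : ∀ u ∈ T, ρ u ≤ w) (hw0 : 0 ≤ w) (τ : (S ⊕ Bool) → (A ⊕ Unit)) :
    ∀ u u', liftδ μA T ρ w u (τ u) u'
      ≤ chainN (fun x y => μA x (downStrat τ x) y) T ρ w u u' := by
  have hch := chainN_nonneg (μ := fun x y => μA x (downStrat τ x) y)
    (fun a b => h0 _ _ _) hρ0 hρw hw0
  rintro (u | b) u'
  · rcases hτ : τ (Sum.inl u) with a | c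
    · have hda : downStrat τ u = a := by simp [downStrat, hτ]
      rcases u' with u' | b'
      · rw [liftδ_inl_inl, chainN_inl_inl, hda]
        split_ifs <;> exact le_rfl
      · rw [liftδ_inl_inl_inr]; exact hch _ _
    · rcases u' with u' | b'
      · rw [liftδ_fresh_inl]; exact hch _ _
      · cases b'
        · rw [liftδ_fresh_fail, chainN_inl_fail]
          split_ifs <;> exact le_rfl
        · rw [liftδ_fresh_fin, chainN_inl_fin]
          split_ifs <;> exact le_rfl
  · rw [liftδ_inr, chainN_inr]

lemma stratVal_liftT (τ : (S ⊕ Bool) → (A ⊕ Unit)) (v : S ⊕ Bool) :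
    stratVal (liftδ μA T ρ w) (liftT S) (liftρ S) τ v
      = reachProb (fun u u' => liftδ μA T ρ w u (τ u) u')
          ({Sum.inr true} : Set (S ⊕ Bool)) v := by
  rw [stratVal, liftT, Finset.sum_pair (by simp : (Sum.inr false : S ⊕ Bool) ≠ Sum.inr true)]
  have e1 : liftρ S (Sum.inr false : S ⊕ Bool) = 0 := by simp [liftρ]
  have e2 : liftρ S (Sum.inr true : S ⊕ Bool) = 1 := by simp [liftρ]
  rw [e1, e2]
  ring


variable [Nonempty A]

/-- L1: the value of the lifted strategy equals `1/w` times the value of `σ`. -/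
lemma stratVal_lift (h0 : ∀ s a s', 0 ≤ μA s a s')
    (hrow : ∀ s ∉ T, ∀ a : A, ∑ s' : S, μA s a s' = 1)
    (hsinkA : ∀ t ∈ T, ∀ (a : A) (b : S), μA t a b = 0)
    (hρ0 : ∀ u ∈ T, 0 ≤ ρ u) (hρw : ∀ u ∈ T, ρ u ≤ w) (hw0 : 0 ≤ w)
    (σ : S → A) (s : S) :
    stratVal (liftδ μA T ρ w) (liftT S) (liftρ S) (liftStrat T σ) (Sum.inl s)
      = (1 / w) * stratVal μA T ρ σ s := by
  set μ : S → S → ℝ := fun x y => μA x (σ x) y with hμ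
  have hμ0 : ∀ a b, 0 ≤ μ a b := fun a b => h0 _ _ _
  have hsinkμ : ∀ u ∈ T, ∀ v, μ u v = 0 := fun u hu v => hsinkA u hu _ v
  have hrowμ : ∀ u ∉ T, ∑ u', μ u u' = 1 := fun u hu => hrow u hu _
  have hrowK := rowM (T := T) hrowμ hsinkμ
  rw [stratVal_liftT, lift_eq, reachProb_eq_toReal, ennReach_chainN hsinkμ,
    ENNReal.toReal_sum (fun t ht => ENNReal.mul_ne_top ENNReal.ofReal_ne_top
      (ennReach_lt_top hμ0 hrowK _ _))]
  rw [stratVal, Finset.mul_sum]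
  refine Finset.sum_congr rfl fun t ht => ?_
  rw [ENNReal.toReal_mul, ENNReal.toReal_ofReal (div_nonneg (hρ0 t ht) hw0),
    ← reachProb_eq_toReal]
  ring

/-- L2: any strategy of `N` is dominated by the lift of its projection. -/
lemma stratVal_lift_le (h0 : ∀ s a s', 0 ≤ μA s a s')
    (hrow : ∀ s ∉ T, ∀ a : A, ∑ s' : S, μA s a s' = 1)
    (hsinkA : ∀ t ∈ T, ∀ (a : A) (b : S), μA t a b = 0)
    (hρ0 : ∀ u ∈ T, 0 ≤ ρ u) (hρw : ∀ u ∈ T, ρ u ≤ w) (hw0 : 0 ≤ w)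
    (τ : (S ⊕ Bool) → (A ⊕ Unit)) (s : S) :
    stratVal (liftδ μA T ρ w) (liftT S) (liftρ S) τ (Sum.inl s)
      ≤ (1 / w) * stratVal μA T ρ (downStrat τ) s := by
  rw [← stratVal_lift h0 hrow hsinkA hρ0 hρw hw0 (downStrat τ) s]
  rw [stratVal_liftT, stratVal_liftT, lift_eq]
  set μ : S → S → ℝ := fun x y => μA x (downStrat τ x) y with hμ
  have hμ0 : ∀ a b, 0 ≤ μ a b := fun a b => h0 _ _ _
  have hsinkμ : ∀ u ∈ T, ∀ v, μ u v = 0 := fun u hu v => hsinkA u hu _ v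
  have hrowμ : ∀ u ∉ T, ∑ u', μ u u' = 1 := fun u hu => hrow u hu _
  rw [reachProb_eq_toReal, reachProb_eq_toReal]
  refine ENNReal.toReal_mono ?_ ?_
  · exact ennReach_lt_top (fun a b => chainN_nonneg hμ0 hρ0 hρw hw0 a b)
      (chainN_row hrowμ hsinkμ) _ _
  · exact ennReach_mono (fun a b => lift_nonneg h0 hρ0 hρw hw0 τ a b)
      (fun a b => lift_le h0 hρ0 hρw hw0 τ a b) _ _

/-- Optimal state values transform as claimed. -/
lemma rewStar_lift (h0 : ∀ s a s', 0 ≤ μA s a s')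
    (hrow : ∀ s ∉ T, ∀ a : A, ∑ s' : S, μA s a s' = 1)
    (hsinkA : ∀ t ∈ T, ∀ (a : A) (b : S), μA t a b = 0)
    (hρ0 : ∀ u ∈ T, 0 ≤ ρ u) (hρw : ∀ u ∈ T, ρ u ≤ w) (hw0 : 0 ≤ w) (s : S) :
    RewStar (liftδ μA T ρ w) (liftT S) (liftρ S) (Sum.inl s)
      = (1 / w) * RewStar μA T ρ s := by
  haveI : Nonempty ((S ⊕ Bool) → (A ⊕ Unit)) := ⟨fun _ => Sum.inr ()⟩
  have hbddM : BddAbove (Set.range fun σ : S → A => stratVal μA T ρ σ s) :=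
    Set.Finite.bddAbove (Set.finite_range _)
  have hbddN : BddAbove (Set.range fun τ : (S ⊕ Bool) → (A ⊕ Unit) =>
      stratVal (liftδ μA T ρ w) (liftT S) (liftρ S) τ (Sum.inl s)) :=
    Set.Finite.bddAbove (Set.finite_range _)
  have hw1 : (0:ℝ) ≤ 1 / w := by positivity
  apply le_antisymm
  · refine ciSup_le fun τ => ?_
    calc stratVal (liftδ μA T ρ w) (liftT S) (liftρ S) τ (Sum.inl s)
        ≤ (1 / w) * stratVal μA T ρ (downStrat τ) s :=
          stratVal_lift_le h0 hrow hsinkA hρ0 hρw hw0 τ s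
      _ ≤ (1 / w) * RewStar μA T ρ s :=
          mul_le_mul_of_nonneg_left (le_ciSup hbddM (downStrat τ)) hw1
  · rw [RewStar, Real.mul_iSup_of_nonneg hw1]
    refine ciSup_le fun σ => ?_
    rw [← stratVal_lift h0 hrow hsinkA hρ0 hρw hw0 σ s]
    exact le_ciSup hbddN (liftStrat T σ)

/-- Optimal nature-vertex values transform as claimed. -/
lemma rewStarN_lift (h0 : ∀ s a s', 0 ≤ μA s a s')
    (hrow : ∀ s ∉ T, ∀ a : A, ∑ s' : S, μA s a s' = 1)
    (hsinkA : ∀ t ∈ T, ∀ (a : A) (b : S), μA t a b = 0)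
    (hρ0 : ∀ u ∈ T, 0 ≤ ρ u) (hρw : ∀ u ∈ T, ρ u ≤ w) (hw0 : 0 ≤ w)
    (s : S) (a : A) :
    RewStarN (liftδ μA T ρ w) (liftT S) (liftρ S) (Sum.inl s) (Sum.inl a)
      = (1 / w) * RewStarN μA T ρ s a := by
  haveI : Nonempty ((S ⊕ Bool) → (A ⊕ Unit)) := ⟨fun _ => Sum.inr ()⟩
  have hw1 : (0:ℝ) ≤ 1 / w := by positivity
  have hsv : ∀ τ : (S ⊕ Bool) → (A ⊕ Unit),
      stratValN (liftδ μA T ρ w) (liftT S) (liftρ S) τ (Sum.inl s) (Sum.inl a)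
        = ∑ s' : S, (if s ∈ T then 0 else μA s a s') *
            stratVal (liftδ μA T ρ w) (liftT S) (liftρ S) τ (Sum.inl s') := by
    intro τ
    rw [stratValN, Fintype.sum_sum_type]
    have hz : ∀ b : Bool, liftδ μA T ρ w (Sum.inl s) (Sum.inl a) (Sum.inr b) *
        stratVal (liftδ μA T ρ w) (liftT S) (liftρ S) τ (Sum.inr b) = 0 := by
      intro b; rw [liftδ_inl_inl_inr, zero_mul]
    rw [Finset.sum_eq_zero (fun b _ => hz b), add_zero]
    exact Finset.sum_congr rfl fun s' _ => by rw [liftδ_inl_inl]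
  by_cases hsT : s ∈ T
  · have hN : ∀ τ : (S ⊕ Bool) → (A ⊕ Unit),
        stratValN (liftδ μA T ρ w) (liftT S) (liftρ S) τ (Sum.inl s) (Sum.inl a) = 0 := by
      intro τ
      rw [hsv τ]
      exact Finset.sum_eq_zero fun s' _ => by rw [if_pos hsT, zero_mul]
    have hM : ∀ σ : S → A, stratValN μA T ρ σ s a = 0 := by
      intro σ
      rw [stratValN]
      exact Finset.sum_eq_zero fun s' _ => by rw [hsinkA s hsT a s', zero_mul]
    rw [RewStarN, RewStarN]
    simp only [hN, hM, ciSup_const, mul_zero]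
  · have hbddMN : BddAbove (Set.range fun σ : S → A => stratValN μA T ρ σ s a) :=
      Set.Finite.bddAbove (Set.finite_range _)
    have hbddNN : BddAbove (Set.range fun τ : (S ⊕ Bool) → (A ⊕ Unit) =>
        stratValN (liftδ μA T ρ w) (liftT S) (liftρ S) τ (Sum.inl s) (Sum.inl a)) :=
      Set.Finite.bddAbove (Set.finite_range _)
    apply le_antisymm
    · refine ciSup_le fun τ => ?_
      have hle : stratValN (liftδ μA T ρ w) (liftT S) (liftρ S) τ (Sum.inl s) (Sum.inl a)
          ≤ (1 / w) * stratValN μA T ρ (downStrat τ) s a := by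
        rw [hsv τ, stratValN, Finset.mul_sum]
        refine Finset.sum_le_sum fun s' _ => ?_
        rw [if_neg hsT]
        calc μA s a s' * stratVal (liftδ μA T ρ w) (liftT S) (liftρ S) τ (Sum.inl s')
            ≤ μA s a s' * ((1 / w) * stratVal μA T ρ (downStrat τ) s') :=
              mul_le_mul_of_nonneg_left
                (stratVal_lift_le h0 hrow hsinkA hρ0 hρw hw0 τ s') (h0 _ _ _)
          _ = 1 / w * (μA s a s' * stratVal μA T ρ (downStrat τ) s') := by ring
      exact le_trans hle (mul_le_mul_of_nonneg_left (le_ciSup hbddMN (downStrat τ)) hw1)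
    · rw [RewStarN, Real.mul_iSup_of_nonneg hw1]
      refine ciSup_le fun σ => ?_
      have heq : (1 / w) * stratValN μA T ρ σ s a
          = stratValN (liftδ μA T ρ w) (liftT S) (liftρ S) (liftStrat T σ)
              (Sum.inl s) (Sum.inl a) := by
        rw [hsv, stratValN, Finset.mul_sum]
        refine Finset.sum_congr rfl fun s' _ => ?_
        rw [if_neg hsT, stratVal_lift h0 hrow hsinkA hρ0 hρw hw0 σ s']
        ring
      rw [heq]
      exact le_ciSup hbddNN (liftStrat T σ)


end strat

end St14


-- STATEMENT 14: let `M` be a weighted parametric MDP with targets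
-- `t₀, …, t_n` of strictly increasing weights `0 = ρ(t₀) < … < ρ(t_n)` and
-- let `N` be the non-weighted MDP obtained by the above construction.  For
-- every graph-preserving valuation and every vertex `v` of `M`,
-- `Rew*_{N[val]}(v) = (1/ρ(t_n)) · Rew*_{M[val]}(v)`.
theorem stmt14 {S A X : Type*} [Fintype S] [DecidableEq S] [Fintype A] [Nonempty A]
    (δ : S → A → S → MvPolynomial X ℝ) (T : Finset S) (ρ : S → ℝ)
    (n : ℕ) (t : Fin (n + 1) → S) (ht : Function.Injective t)
    (hT : T = Finset.univ.image fun i => t i)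
    (h0 : ρ (t 0) = 0) (hmono : StrictMono fun i => ρ (t i))
    (hsink : ∀ s ∈ T, ∀ a s', δ s a s' = 0)
    (val : X → ℝ) (hgp : GraphPreserving δ T val) :
    ∀ v : S ⊕ S × A,
      vVal (liftδ (fun s a s' => MvPolynomial.eval val (δ s a s')) T ρ
          (ρ (t (Fin.last n))))
        (liftT S) (liftρ S) (liftVert v) =
      (1 / ρ (t (Fin.last n))) *
        vVal (fun s a s' => MvPolynomial.eval val (δ s a s')) T ρ v := by
  intro v
  set μA : S → A → S → ℝ := fun s a s' => MvPolynomial.eval val (δ s a s') with hμA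
  set w : ℝ := ρ (t (Fin.last n)) with hw
  have h0' : ∀ s a s', 0 ≤ μA s a s' := hgp.1
  have hrow' : ∀ s ∉ T, ∀ a : A, ∑ s' : S, μA s a s' = 1 := hgp.2.1
  have hsinkA : ∀ u ∈ T, ∀ (a : A) (b : S), μA u a b = 0 := by
    intro u hu a b
    rw [hμA]
    simp only
    rw [hsink u hu a b, map_zero]
  have hρ0 : ∀ u ∈ T, 0 ≤ ρ u := by
    intro u hu
    rw [hT, Finset.mem_image] at hu
    obtain ⟨i, -, rfl⟩ := hu
    have := hmono.monotone (Fin.zero_le i)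
    simpa [h0] using this
  have hρw : ∀ u ∈ T, ρ u ≤ w := by
    intro u hu
    rw [hT, Finset.mem_image] at hu
    obtain ⟨i, -, rfl⟩ := hu
    exact hmono.monotone (Fin.le_last i)
  have hw0 : 0 ≤ w :=
    hρ0 _ (by rw [hT, Finset.mem_image]; exact ⟨Fin.last n, Finset.mem_univ _, rfl⟩)
  rcases v with s | ⟨s, a⟩
  · show RewStar (liftδ μA T ρ w) (liftT S) (liftρ S) (Sum.inl s)
      = (1 / w) * RewStar μA T ρ s
    exact St14.rewStar_lift h0' hrow' hsinkA hρ0 hρw hw0 s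
  · show RewStarN (liftδ μA T ρ w) (liftT S) (liftρ S) (Sum.inl s) (Sum.inl a)
      = (1 / w) * RewStarN μA T ρ s a
    exact St14.rewStarN_lift h0' hrow' hsinkA hρ0 hρw hw0 s a
end
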